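/- arXiv:2604.00833 — 6 statements merged into one kernel-verified Lean document; each statement's English description precedes it below -/
import Mathlib

section
/- Let u,v be distinct vertices of a weakly connected digraph G, and let π = (π₁,…,πₖ) be a pattern. Then there is a (u,v)-multicut in G with pattern π if and only if for every path P of G between u and v (viewed as a subdigraph of G), there is a (u,v)-multicut in P with pattern π. -/
/-- A multicut `(A 0, …, A k)` between `u` and `v` in the digraph `G`,
with pattern `π` (where `π i = true` stands for `+1`, `false` for `−1`). -/
def IsMulticut {V : Type} (G : Digraph V) (u v : V) (k : ℕ)
    (A : Fin (k+1) → Set V) (π : Fin k → Bool) : Prop :=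
  (∀ i j : Fin (k+1), i ≠ j → Disjoint (A i) (A j)) ∧
  (⋃ i, A i) = Set.univ ∧
  u ∈ A 0 ∧ v ∈ A (Fin.last k) ∧
  (∀ i j : Fin (k+1), (i : ℕ) + 2 ≤ (j : ℕ) →
    ∀ x ∈ A i, ∀ y ∈ A j, ¬ G.Adj x y ∧ ¬ G.Adj y x) ∧
  (∀ i : Fin k, ∀ x ∈ A i.castSucc, ∀ y ∈ A i.succ,
    (π i = true → ¬ G.Adj y x) ∧ (π i = false → ¬ G.Adj x y))

/-- A digraph is weakly connected (`1-weak`) if its underlying graph is connected. -/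
def WeaklyConnected {V : Type} (G : Digraph V) : Prop :=
  ∀ x y : V, Relation.ReflTransGen (fun a b => G.Adj a b ∨ G.Adj b a) x y

/-- A path between `u` and `v` in the digraph `G`: a sequence of distinct vertices
`p 0 = u, …, p n = v` such that consecutive vertices are joined by an edge of `G`,
oriented forwards when `dir i = true` and backwards when `dir i = false`. -/
structure DiPath {V : Type} (G : Digraph V) (u v : V) where
  n : ℕ
  p : Fin (n+1) → V
  inj : Function.Injective p
  first : p 0 = u
  last : p (Fin.last n) = v
  dir : Fin n → Bool
  adj : ∀ i : Fin n, (dir i = true → G.Adj (p i.castSucc) (p i.succ)) ∧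
        (dir i = false → G.Adj (p i.succ) (p i.castSucc))

/-- The path `P`, viewed as a digraph on its own (index) vertex set. -/
def DiPath.digraph {V : Type} {G : Digraph V} {u v : V} (P : DiPath G u v) :
    Digraph (Fin (P.n+1)) :=
  { Adj := fun a b => ∃ i : Fin P.n,
      (P.dir i = true ∧ a = i.castSucc ∧ b = i.succ) ∨
      (P.dir i = false ∧ a = i.succ ∧ b = i.castSucc) }

/-- A pattern (function `Fin k → Bool`) is alternating if consecutive entries differ. -/
def AltPat (k : ℕ) (π : Fin k → Bool) : Prop :=
  ∀ (i : ℕ) (h : i + 1 < k), π ⟨i+1, h⟩ = ! π ⟨i, by omega⟩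

/-- A `ρ`-concatenation for `(P,u,v)`: vertices `q 0 = u, …, q t = v` in order along `P`
(not necessarily distinct), such that the subpath between `q (s-1)` and `q s` is a
directed path, directed forwards (towards `v`) exactly when `ρ s = true`. -/
def IsConcat {V : Type} {G : Digraph V} {u v : V} (P : DiPath G u v)
    (t : ℕ) (q : Fin (t+1) → Fin (P.n+1)) (ρ : Fin t → Bool) : Prop :=
  Monotone q ∧ q 0 = 0 ∧ q (Fin.last t) = Fin.last P.n ∧
  ∀ (s : Fin t) (i : Fin P.n),
    (q s.castSucc : ℕ) ≤ (i : ℕ) → (i : ℕ) < (q s.succ : ℕ) → P.dir i = ρ s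

/-- The pattern `π⁺⁺ = (−π₁, π₁, …, π_k, −π_k)` obtained from `π`. -/
def ppExt (k : ℕ) (hk : 0 < k) (π : Fin k → Bool) : Fin (k+2) → Bool :=
  fun j =>
    if h : 1 ≤ (j : ℕ) ∧ (j : ℕ) ≤ k then π ⟨(j : ℕ) - 1, by omega⟩
    else if (j : ℕ) = 0 then ! π ⟨0, hk⟩
    else ! π ⟨k - 1, by omega⟩


section MulticutAux

variable {V : Type}

/-- Extension of a pattern to all of `ℕ` (junk value `true` out of range). -/
def πE (k : ℕ) (π : Fin k → Bool) : ℕ → Bool :=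
  fun a => if h : a < k then π ⟨a, h⟩ else true

/-- One step of the "highest reachable label" recursion. -/
def stepv (πe : ℕ → Bool) (k : ℕ) (d : Bool) (a : ℕ) : ℕ :=
  if a < k ∧ πe a = d then a + 1 else a

lemma stepv_ge (πe : ℕ → Bool) (k : ℕ) (d : Bool) (a : ℕ) : a ≤ stepv πe k d a := by
  unfold stepv; split <;> omega

lemma stepv_le_succ (πe : ℕ → Bool) (k : ℕ) (d : Bool) (a : ℕ) : stepv πe k d a ≤ a + 1 := by
  unfold stepv; split <;> omega

lemma stepv_mono (πe : ℕ → Bool) (k : ℕ) (d : Bool) {a b : ℕ} (h : a ≤ b) :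
    stepv πe k d a ≤ stepv πe k d b := by
  rcases eq_or_lt_of_le h with rfl | hlt
  · exact le_refl _
  · calc stepv πe k d a ≤ a + 1 := stepv_le_succ ..
      _ ≤ b := hlt
      _ ≤ stepv πe k d b := stepv_ge ..

lemma stepv_le_k (πe : ℕ → Bool) (k : ℕ) (d : Bool) {a : ℕ} (h : a ≤ k) :
    stepv πe k d a ≤ k := by
  unfold stepv; split <;> omega

lemma stepv_eq_succ (πe : ℕ → Bool) (k : ℕ) (d : Bool) {a : ℕ}
    (h : a + 1 ≤ stepv πe k d a) : a < k ∧ πe a = d := by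
  unfold stepv at h; split at h
  · assumption
  · omega

/-- `w` is a walk in `G` starting at `x`: each entry `(d, y)` moves to `y`, using a
forward edge when `d = true` and a backward edge when `d = false`. -/
def WalkFrom (G : Digraph V) : V → List (Bool × V) → Prop
  | _, [] => True
  | x, (d, y) :: w => (cond d (G.Adj x y) (G.Adj y x)) ∧ WalkFrom G y w

/-- End vertex of a walk. -/
def wend : V → List (Bool × V) → V
  | x, [] => x
  | _, (_, y) :: w => wend y w

/-- Highest label reachable at the end of a walk, starting from label `a`. -/
def whi (πe : ℕ → Bool) (k : ℕ) : ℕ → List (Bool × V) → ℕ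
  | a, [] => a
  | a, (d, _) :: w => whi πe k (stepv πe k d a) w

lemma walkFrom_append (G : Digraph V) (w₁ w₂ : List (Bool × V)) (x : V) :
      WalkFrom G x (w₁ ++ w₂) ↔ WalkFrom G x w₁ ∧ WalkFrom G (wend x w₁) w₂ := by
  induction w₁ generalizing x with
  | nil => simp [WalkFrom, wend]
  | cons hd w₁ ih =>
      obtain ⟨d, y⟩ := hd
      simp only [List.cons_append, WalkFrom, wend, List.append_eq, ih y, and_assoc]

lemma wend_append (w₁ w₂ : List (Bool × V)) (x : V) :
    wend x (w₁ ++ w₂) = wend (wend x w₁) w₂ := by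
  induction w₁ generalizing x with
  | nil => rfl
  | cons hd w₁ ih =>
      obtain ⟨d, y⟩ := hd
      simp only [List.cons_append, wend, List.append_eq, ih y]

lemma whi_append (πe : ℕ → Bool) (k : ℕ) (w₁ w₂ : List (Bool × V)) (a : ℕ) :
    whi πe k a (w₁ ++ w₂) = whi πe k (whi πe k a w₁) w₂ := by
  induction w₁ generalizing a with
  | nil => rfl
  | cons hd w₁ ih =>
      obtain ⟨d, y⟩ := hd
      simp only [List.cons_append, whi, List.append_eq, ih]

lemma whi_ge (πe : ℕ → Bool) (k : ℕ) : ∀ (w : List (Bool × V)) (a : ℕ), a ≤ whi πe k a w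
  | [], _ => le_refl _
  | (d, y) :: w, a => le_trans (stepv_ge πe k d a) (whi_ge πe k w _)

lemma whi_mono (πe : ℕ → Bool) (k : ℕ) : ∀ (w : List (Bool × V)) {a b : ℕ}, a ≤ b →
    whi πe k a w ≤ whi πe k b w
  | [], _, _, h => h
  | (d, _) :: w, _, _, h => whi_mono πe k w (stepv_mono πe k d h)

lemma whi_le_k (πe : ℕ → Bool) (k : ℕ) : ∀ (w : List (Bool × V)) {a : ℕ}, a ≤ k →
    whi πe k a w ≤ k
  | [], _, h => h
  | (d, _) :: w, _, h => whi_le_k πe k w (stepv_le_k πe k d h)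

lemma wend_take : ∀ (w : List (Bool × V)) (x : V) (t : ℕ)
    (h : t < (x :: w.map Prod.snd).length),
    wend x (w.take t) = (x :: w.map Prod.snd).get ⟨t, h⟩
  | [], x, t, h => by
      simp only [List.map_nil, List.length_cons, List.length_nil] at h
      interval_cases t
      · rfl
  | (d, y) :: w, x, 0, h => rfl
  | (d, y) :: w, x, t + 1, h => by
      simp only [List.take, wend, List.map_cons, List.get]
      exact wend_take w y t (by simpa using h)

lemma walk_step (G : Digraph V) : ∀ (w : List (Bool × V)) (x : V), WalkFrom G x w →
    ∀ (t : ℕ) (h : t < w.length),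
    ((w.get ⟨t, h⟩).1 = true → G.Adj (wend x (w.take t)) (wend x (w.take (t+1)))) ∧
    ((w.get ⟨t, h⟩).1 = false → G.Adj (wend x (w.take (t+1))) (wend x (w.take t)))
  | [], x, hw, t, h => absurd h (by simp)
  | (d, y) :: w, x, hw, 0, h => by
      cases d
      · exact ⟨fun hc => by simp at hc, fun _ => hw.1⟩
      · exact ⟨fun _ => hw.1, fun hc => by simp at hc⟩
  | (d, y) :: w, x, hw, t + 1, h => by
      simpa only [List.take, wend, List.get] using
        walk_step G w y hw.2 t (by simpa using h)

lemma take_succ_get : ∀ (w : List (Bool × V)) (t : ℕ) (h : t < w.length),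
    w.take (t+1) = w.take t ++ [w.get ⟨t, h⟩] := by
  intro w t h
  rw [List.take_succ]
  simp [List.getElem?_eq_getElem h]

/-- If the walk `w` from `u` to `v` visits no vertex twice, then (being a path) the
hypothesis provides a multicut on it, which forces the top label to reach `k`. -/
lemma path_bound (G : Digraph V) (u v : V) (k : ℕ) (π : Fin k → Bool)
    (hyp : ∀ P : DiPath G u v, ∃ A : Fin (k+1) → Set (Fin (P.n+1)),
      IsMulticut P.digraph 0 (Fin.last P.n) k A π)
    (w : List (Bool × V)) (hw : WalkFrom G u w) (hend : wend u w = v)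
    (hnd : (u :: w.map Prod.snd).Nodup) :
    k ≤ whi (πE k π) k 0 w := by
  set πe := πE k π with hπe
  have hlen : (u :: w.map Prod.snd).length = w.length + 1 := by simp
  set P : DiPath G u v :=
    { n := w.length
      p := fun t => wend u (w.take t)
      inj := by
        intro s t hst
        have hst' : wend u (w.take (s : ℕ)) = wend u (w.take (t : ℕ)) := hst
        rw [wend_take w u s (by rw [hlen]; exact s.isLt),
            wend_take w u t (by rw [hlen]; exact t.isLt)] at hst'
        have := List.nodup_iff_injective_get.mp hnd hst'
        have h2 : (s : ℕ) = (t : ℕ) := Fin.mk.inj this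
        exact Fin.ext h2
      first := by
        show wend u (w.take ((0 : Fin (w.length+1)) : ℕ)) = u
        norm_num
        rfl
      last := by
        show wend u (w.take ((Fin.last w.length : Fin (w.length+1)) : ℕ)) = v
        rw [Fin.val_last, List.take_length, hend]
      dir := fun i => (w.get ⟨i.val, i.isLt⟩).1
      adj := by
        intro i
        have hws := walk_step G w u hw i.val i.isLt
        constructor <;> intro hd
        · show G.Adj (wend u (w.take (i.castSucc : ℕ))) (wend u (w.take (i.succ : ℕ)))
          rw [Fin.coe_castSucc, Fin.val_succ]
          exact hws.1 hd
        · show G.Adj (wend u (w.take (i.succ : ℕ))) (wend u (w.take (i.castSucc : ℕ)))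
          rw [Fin.coe_castSucc, Fin.val_succ]
          exact hws.2 hd } with hP
  obtain ⟨A, hA⟩ := hyp P
  obtain ⟨hdisj, hcover, hu0, hvlast, h5, h6⟩ := hA
  have hex : ∀ j : Fin (w.length+1), ∃ i, j ∈ A i := by
    intro j
    have : j ∈ ⋃ i, A i := by rw [hcover]; exact Set.mem_univ j
    exact Set.mem_iUnion.mp this
  set g : Fin (w.length+1) → Fin (k+1) := fun j => (hex j).choose with hgdef
  have hg : ∀ j, j ∈ A (g j) := fun j => (hex j).choose_spec
  have guniq : ∀ j i, j ∈ A i → g j = i := by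
    intro j i h
    by_contra hne
    exact Set.disjoint_left.mp (hdisj _ _ hne) (hg j) h
  have hadj : ∀ i : Fin w.length,
      cond (P.dir i) (P.digraph.Adj i.castSucc i.succ) (P.digraph.Adj i.succ i.castSucc) := by
    intro i
    cases hdi : P.dir i
    · exact ⟨i, Or.inr ⟨hdi, rfl, rfl⟩⟩
    · exact ⟨i, Or.inl ⟨hdi, rfl, rfl⟩⟩
  have fact1 : ∀ i : Fin w.length,
      ((g i.succ : ℕ) ≤ (g i.castSucc : ℕ) + 1) ∧ ((g i.castSucc : ℕ) ≤ (g i.succ : ℕ) + 1) := by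
    intro i
    have hb := hadj i
    constructor
    · by_contra hc
      push_neg at hc
      have hno := h5 (g i.castSucc) (g i.succ) (by omega) _ (hg i.castSucc) _ (hg i.succ)
      cases hdi : P.dir i <;> rw [hdi] at hb
      · exact hno.2 hb
      · exact hno.1 hb
    · by_contra hc
      push_neg at hc
      have hno := h5 (g i.succ) (g i.castSucc) (by omega) _ (hg i.succ) _ (hg i.castSucc)
      cases hdi : P.dir i <;> rw [hdi] at hb
      · exact hno.1 hb
      · exact hno.2 hb
  have fact2 : ∀ i : Fin w.length, (g i.succ : ℕ) = (g i.castSucc : ℕ) + 1 →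
      πe (g i.castSucc : ℕ) = P.dir i := by
    intro i hup
    have hak : (g i.castSucc : ℕ) < k := by
      have := (g i.succ).isLt; omega
    set m : Fin k := ⟨(g i.castSucc : ℕ), hak⟩ with hm
    have e1 : m.castSucc = g i.castSucc := by
      apply Fin.ext; simp [hm]
    have e2 : m.succ = g i.succ := by
      apply Fin.ext; simp [hm, Fin.val_succ]; omega
    have h66 := h6 m i.castSucc (by rw [e1]; exact hg i.castSucc)
      i.succ (by rw [e2]; exact hg i.succ)
    have hb := hadj i
    rw [hπe]
    unfold πE
    rw [dif_pos hak]
    cases hdi : P.dir i <;> rw [hdi] at hb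
    · cases hpm : π m
      · rfl
      · exact absurd hb (h66.1 hpm)
    · cases hpm : π m
      · exact absurd hb (h66.2 hpm)
      · rfl
  have hs_step : ∀ (t : ℕ) (h : t < w.length),
      whi πe k 0 (w.take (t+1)) = stepv πe k ((w.get ⟨t, h⟩).1) (whi πe k 0 (w.take t)) := by
    intro t h
    rw [take_succ_get w t h, whi_append]
    rfl
  have key : ∀ j : Fin (w.length + 1), ((g j : ℕ)) ≤ whi πe k 0 (w.take (j : ℕ)) := by
    intro j
    induction j using Fin.induction with
    | zero =>
        have hg0 : g 0 = 0 := guniq _ _ hu0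
        simp [hg0]
    | succ i ih =>
        rw [Fin.coe_castSucc] at ih
        rw [Fin.val_succ, hs_step i.val i.isLt]
        have h1 := (fact1 i).1
        by_cases hcase : (g i.succ : ℕ) ≤ whi πe k 0 (w.take (i : ℕ))
        · exact le_trans hcase (stepv_ge ..)
        · have hup : (g i.succ : ℕ) = (g i.castSucc : ℕ) + 1 := by omega
          have ha : (g i.castSucc : ℕ) = whi πe k 0 (w.take (i : ℕ)) := by omega
          have hπ := fact2 i hup
          have hk2 : whi πe k 0 (w.take (i : ℕ)) < k := by
            have := (g i.succ).isLt; omega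
          have hdir : P.dir i = (w.get ⟨i.val, i.isLt⟩).1 := rfl
          rw [stepv, if_pos ⟨hk2, by rw [← ha, hπ, hdir]⟩]
          omega
  have hlast := key (Fin.last w.length)
  have hgl : g (Fin.last w.length) = Fin.last k := guniq _ _ hvlast
  rw [hgl, Fin.val_last, Fin.val_last, List.take_length] at hlast
  exact hlast

/-- Every walk from `u` to `v` has top label at least `k`, by shortcutting repeated
vertices and applying `path_bound`. -/
lemma walk_bound (G : Digraph V) (u v : V) (k : ℕ) (π : Fin k → Bool)
    (hyp : ∀ P : DiPath G u v, ∃ A : Fin (k+1) → Set (Fin (P.n+1)),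
      IsMulticut P.digraph 0 (Fin.last P.n) k A π) :
    ∀ (m : ℕ) (w : List (Bool × V)), w.length < m → WalkFrom G u w → wend u w = v →
      k ≤ whi (πE k π) k 0 w := by
  intro m
  induction m with
  | zero => intro w h; omega
  | succ m ih =>
      intro w hlen hw hend
      by_cases hnd : (u :: w.map Prod.snd).Nodup
      · exact path_bound G u v k π hyp w hw hend hnd
      · have hvlen : (u :: w.map Prod.snd).length = w.length + 1 := by simp
        rw [List.nodup_iff_injective_get] at hnd
        rw [Function.not_injective_iff] at hnd
        obtain ⟨s, t, hst, hne⟩ := hnd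
        have main : ∀ s t : Fin (u :: w.map Prod.snd).length, (s : ℕ) < (t : ℕ) →
            (u :: w.map Prod.snd).get s = (u :: w.map Prod.snd).get t →
            k ≤ whi (πE k π) k 0 w := by
          intro s t hlt heq
          have hsle : (s : ℕ) < w.length + 1 := by rw [← hvlen]; exact s.isLt
          have htle : (t : ℕ) ≤ w.length := by
            have := t.isLt; omega
          have hveq : wend u (w.take (s : ℕ)) = wend u (w.take (t : ℕ)) := by
            rw [wend_take w u s s.isLt, wend_take w u t t.isLt]
            exact heq
          set w' : List (Bool × V) := w.take (s : ℕ) ++ w.drop (t : ℕ) with hw'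
          have hsplit : ∀ r : ℕ, WalkFrom G u (w.take r ++ w.drop r) := by
            intro r; rw [List.take_append_drop]; exact hw
          have hw's : WalkFrom G u w' := by
            rw [hw', walkFrom_append]
            refine ⟨((walkFrom_append G _ _ u).mp (hsplit (s : ℕ))).1, ?_⟩
            rw [hveq]
            exact ((walkFrom_append G _ _ u).mp (hsplit (t : ℕ))).2
          have hw'end : wend u w' = v := by
            rw [hw', wend_append, hveq, ← wend_append, List.take_append_drop, hend]
          have hw'len : w'.length < w.length := by
            rw [hw', List.length_append, List.length_take, List.length_drop]
            omega
          have hpref : whi (πE k π) k 0 (w.take (s : ℕ)) ≤ whi (πE k π) k 0 (w.take (t : ℕ)) := by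
            have hdecomp : w.take (t : ℕ) = w.take (s : ℕ) ++ ((w.drop (s : ℕ)).take ((t : ℕ) - (s : ℕ))) := by
              rw [← List.take_add]
              congr 1
              omega
            rw [hdecomp, whi_append]
            exact whi_ge ..
          have hk' : k ≤ whi (πE k π) k 0 w' := ih w' (by omega) hw's hw'end
          calc k ≤ whi (πE k π) k 0 w' := hk'
            _ = whi (πE k π) k (whi (πE k π) k 0 (w.take (s : ℕ))) (w.drop (t : ℕ)) := by
                rw [hw', whi_append]
            _ ≤ whi (πE k π) k (whi (πE k π) k 0 (w.take (t : ℕ))) (w.drop (t : ℕ)) :=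
                whi_mono _ _ _ hpref
            _ = whi (πE k π) k 0 (w.take (t : ℕ) ++ w.drop (t : ℕ)) := by rw [whi_append]
            _ = whi (πE k π) k 0 w := by rw [List.take_append_drop]
        have hne' : (s : ℕ) ≠ (t : ℕ) := fun h => hne (Fin.ext h)
        rcases lt_or_gt_of_ne hne' with h | h
        · exact main s t h hst
        · exact main t s h hst.symm

end MulticutAux

/-- Theorem 4.1 (`getcuts`): for distinct vertices `u, v` of a weakly connected
digraph `G` and a pattern `π`, there is a `(u,v)`-multicut in `G` with pattern `π`
if and only if every path of `G` between `u` and `v` (viewed as a digraph in its own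
right) admits a multicut between its ends with pattern `π`. -/
theorem multicut_iff_all_paths {V : Type} (G : Digraph V)
    (hG : WeaklyConnected G) (u v : V) (huv : u ≠ v)
    (k : ℕ) (hk : 0 < k) (π : Fin k → Bool) :
    (∃ A : Fin (k+1) → Set V, IsMulticut G u v k A π) ↔
    (∀ P : DiPath G u v, ∃ A : Fin (k+1) → Set (Fin (P.n+1)),
      IsMulticut P.digraph 0 (Fin.last P.n) k A π) := by
  constructor
  · rintro ⟨A, hA⟩ P
    obtain ⟨hdisj, hcover, hu, hv, h5, h6⟩ := hA
    have hGadj : ∀ a b : Fin (P.n+1), P.digraph.Adj a b → G.Adj (P.p a) (P.p b) := by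
      rintro a b ⟨t, ⟨hd, rfl, rfl⟩ | ⟨hd, rfl, rfl⟩⟩
      · exact (P.adj t).1 hd
      · exact (P.adj t).2 hd
    refine ⟨fun i => P.p ⁻¹' (A i), ?_, ?_, ?_, ?_, ?_, ?_⟩
    · intro i j hne
      exact Set.disjoint_left.mpr fun a ha hb =>
        Set.disjoint_left.mp (hdisj i j hne) ha hb
    · ext a
      simp only [Set.mem_iUnion, Set.mem_preimage, Set.mem_univ, iff_true]
      have : P.p a ∈ ⋃ i, A i := by rw [hcover]; exact Set.mem_univ _
      exact Set.mem_iUnion.mp this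
    · show P.p 0 ∈ A 0
      rw [P.first]; exact hu
    · show P.p (Fin.last P.n) ∈ A (Fin.last k)
      rw [P.last]; exact hv
    · intro i j hij x hx y hy
      have := h5 i j hij _ hx _ hy
      exact ⟨fun h => this.1 (hGadj _ _ h), fun h => this.2 (hGadj _ _ h)⟩
    · intro i x hx y hy
      have := h6 i _ hx _ hy
      exact ⟨fun hπ h => this.1 hπ (hGadj _ _ h), fun hπ h => this.2 hπ (hGadj _ _ h)⟩
  · intro hyp
    set πe := πE k π with hπe
    set S : V → Set ℕ := fun x =>
      {a | ∃ w : List (Bool × V), WalkFrom G u w ∧ wend u w = x ∧ whi πe k 0 w = a} with hS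
    have hne : ∀ x, (S x).Nonempty := by
      intro x
      have hrel := hG u x
      induction hrel with
      | refl => exact ⟨0, [], trivial, rfl, rfl⟩
      | @tail b c hr hbc ih =>
          obtain ⟨a0, w, hw, hend, hwhi⟩ := ih
          rcases hbc with h | h
          · exact ⟨_, w ++ [(true, c)],
              (walkFrom_append G w [(true, c)] u).mpr ⟨hw, by rw [hend]; exact ⟨h, trivial⟩⟩,
              by rw [wend_append, hend]; rfl, rfl⟩
          · exact ⟨_, w ++ [(false, c)],
              (walkFrom_append G w [(false, c)] u).mpr ⟨hw, by rw [hend]; exact ⟨h, trivial⟩⟩,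
              by rw [wend_append, hend]; rfl, rfl⟩
    set f : V → ℕ := fun x => sInf (S x) with hf
    have hmem : ∀ x, f x ∈ S x := fun x => Nat.sInf_mem (hne x)
    have hle : ∀ {x : V} {a : ℕ}, a ∈ S x → f x ≤ a := fun h => Nat.sInf_le h
    have hfk : ∀ x, f x ≤ k := by
      intro x
      obtain ⟨w, hw, hend, hwhi⟩ := hmem x
      rw [← hwhi]
      exact whi_le_k πe k w (Nat.zero_le k)
    have hedge : ∀ x y, G.Adj x y →
        f y ≤ stepv πe k true (f x) ∧ f x ≤ stepv πe k false (f y) := by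
      intro x y hxy
      constructor
      · obtain ⟨w, hw, hend, hwhi⟩ := hmem x
        apply hle
        exact ⟨w ++ [(true, y)],
          (walkFrom_append G w [(true, y)] u).mpr ⟨hw, by rw [hend]; exact ⟨hxy, trivial⟩⟩,
          by rw [wend_append, hend]; rfl,
          by rw [whi_append, hwhi]; rfl⟩
      · obtain ⟨w, hw, hend, hwhi⟩ := hmem y
        apply hle
        exact ⟨w ++ [(false, x)],
          (walkFrom_append G w [(false, x)] u).mpr ⟨hw, by rw [hend]; exact ⟨hxy, trivial⟩⟩,
          by rw [wend_append, hend]; rfl,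
          by rw [whi_append, hwhi]; rfl⟩
    have hfu : f u = 0 := Nat.le_antisymm (hle ⟨[], trivial, rfl, rfl⟩) (Nat.zero_le _)
    have hfv : f v = k := by
      apply le_antisymm (hfk v)
      obtain ⟨w, hw, hend, hwhi⟩ := hmem v
      rw [← hwhi]
      exact walk_bound G u v k π hyp (w.length + 1) w (by omega) hw hend
    refine ⟨fun i => {x | f x = (i : ℕ)}, ?_, ?_, ?_, ?_, ?_, ?_⟩
    · intro i j hne'
      refine Set.disjoint_left.mpr fun x hx hy => ?_
      exact hne' (Fin.ext (hx ▸ hy ▸ rfl))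
    · ext x
      simp only [Set.mem_iUnion, Set.mem_setOf_eq, Set.mem_univ, iff_true]
      exact ⟨⟨f x, by have := hfk x; omega⟩, rfl⟩
    · show f u = ((0 : Fin (k+1)) : ℕ)
      rw [hfu]; simp
    · show f v = ((Fin.last k : Fin (k+1)) : ℕ)
      rw [hfv, Fin.val_last]
    · intro i j hij x hx y hy
      have hx' : f x = (i : ℕ) := hx
      have hy' : f y = (j : ℕ) := hy
      constructor
      · intro hadj
        have h1 := (hedge x y hadj).1
        have h2 := stepv_le_succ πe k true (f x)
        omega
      · intro hadj
        have h1 := (hedge y x hadj).2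
        have h2 := stepv_le_succ πe k false (f x)
        omega
    · intro i x hx y hy
      have hx' : f x = ((i.castSucc : Fin (k+1)) : ℕ) := hx
      have hy' : f y = ((i.succ : Fin (k+1)) : ℕ) := hy
      rw [Fin.coe_castSucc] at hx'
      rw [Fin.val_succ] at hy'
      constructor
      · intro hπ hadj
        have h1 := (hedge y x hadj).2
        have h3 := stepv_eq_succ πe k false (a := f x) (by omega)
        rw [hx', hπe] at h3
        unfold πE at h3
        rw [dif_pos i.isLt] at h3
        simp only [Fin.eta] at h3
        rw [hπ] at h3
        exact absurd h3.2 (by simp)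
      · intro hπ hadj
        have h1 := (hedge x y hadj).1
        have h3 := stepv_eq_succ πe k true (a := f x) (by omega)
        rw [hx', hπe] at h3
        unfold πE at h3
        rw [dif_pos i.isLt] at h3
        simp only [Fin.eta] at h3
        rw [hπ] at h3
        exact absurd h3.2 (by simp)
end

section
/- Let u,v be distinct vertices of a weakly connected digraph G, and suppose there is a (u,v)-multicut in G with pattern π = (π₁,…,πₖ). Then there is a (u,v)-multicut (A₀,…,Aₖ) in G with pattern π such that for each 1 ≤ i ≤ k, the induced subdigraphs G[A₀ ∪ ⋯ ∪ Aᵢ₋₁] and G[Aᵢ ∪ ⋯ ∪ Aₖ] are both weakly connected. -/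
/-- The set `S` induces a weakly connected subdigraph of `G`. -/
def WeaklyConnectedOn {V : Type} (G : Digraph V) (S : Set V) : Prop :=
  ∀ x ∈ S, ∀ y ∈ S,
    Relation.ReflTransGen (fun a b => a ∈ S ∧ b ∈ S ∧ (G.Adj a b ∨ G.Adj b a)) x y

/-- Walks in the underlying graph of `G` staying inside `S`. -/
def MReach {V : Type} (G : Digraph V) (S : Set V) (x y : V) : Prop :=
  Relation.ReflTransGen (fun a b => a ∈ S ∧ b ∈ S ∧ (G.Adj a b ∨ G.Adj b a)) x y

theorem MReach.mono {V : Type} {G : Digraph V} {S T : Set V} (hST : S ⊆ T)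
    {x y : V} (h : MReach G S x y) : MReach G T x y :=
  Relation.ReflTransGen.mono (fun a b hab => ⟨hST hab.1, hST hab.2.1, hab.2.2⟩) _ _ h

theorem MReach.symm {V : Type} {G : Digraph V} {S : Set V}
    {x y : V} (h : MReach G S x y) : MReach G S y x := by
  induction h with
  | refl => exact .refl
  | @tail b w hwb hstep ih =>
    exact Relation.ReflTransGen.head ⟨hstep.2.1, hstep.1, hstep.2.2.symm⟩ ih

/-- Theorem 4.2 (`makebonds`): if there is a `(u,v)`-multicut in `G` with pattern `π`,
then there is one, `(A 0, …, A k)`, such that for each `i`, the induced subdigraphs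
`G[A 0 ∪ ⋯ ∪ A (i-1)]` and `G[A i ∪ ⋯ ∪ A k]` are both weakly connected. -/
theorem multicut_with_connected_sides {V : Type} (G : Digraph V)
    (hG : WeaklyConnected G) (u v : V) (huv : u ≠ v)
    (k : ℕ) (hk : 0 < k) (π : Fin k → Bool)
    (hex : ∃ A : Fin (k+1) → Set V, IsMulticut G u v k A π) :
    ∃ A : Fin (k+1) → Set V, IsMulticut G u v k A π ∧
      ∀ i : Fin k,
        WeaklyConnectedOn G {x | ∃ j : Fin (k+1), (j : ℕ) ≤ (i : ℕ) ∧ x ∈ A j} ∧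
        WeaklyConnectedOn G {x | ∃ j : Fin (k+1), (i : ℕ) < (j : ℕ) ∧ x ∈ A j} := by
  classical
  obtain ⟨A, hdisj, hunion, huA, hvA, hfar, hdir⟩ := hex
  have hmem : ∀ x : V, ∃ j, x ∈ A j := by
    intro x
    have hx : x ∈ ⋃ i, A i := by rw [hunion]; trivial
    exact Set.mem_iUnion.mp hx
  let f : V → Fin (k+1) := fun x => Classical.choose (hmem x)
  have hf : ∀ x, x ∈ A (f x) := fun x => Classical.choose_spec (hmem x)
  have hfuniq : ∀ x j, x ∈ A j → f x = j := by
    intro x j hj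
    by_contra hne
    exact Set.disjoint_left.mp (hdisj _ _ hne) (hf x) hj
  have hflip : ∀ x y, (G.Adj x y ∨ G.Adj y x) → (f y : ℕ) ≤ (f x : ℕ) + 1 := by
    intro x y hxy
    by_contra hlt
    push_neg at hlt
    have hh := hfar (f x) (f y) (by omega) x (hf x) y (hf y)
    rcases hxy with h1 | h2
    · exact hh.1 h1
    · exact hh.2 h2
  -- the function g
  let gS : V → Set ℕ := fun x => {m | (f x : ℕ) ≤ m ∧ MReach G {y | (f y : ℕ) ≤ m} u x}
  have hgS_ne : ∀ x, k ∈ gS x := by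
    intro x
    refine ⟨Nat.lt_succ_iff.mp (f x).isLt, ?_⟩
    exact Relation.ReflTransGen.mono
      (fun a b hab => ⟨Nat.lt_succ_iff.mp (f a).isLt, Nat.lt_succ_iff.mp (f b).isLt, hab⟩)
      _ _ (hG u x)
  let g : V → ℕ := fun x => sInf (gS x)
  have hg_mem : ∀ x, g x ∈ gS x := fun x => Nat.sInf_mem ⟨k, hgS_ne x⟩
  have hg_le : ∀ x m, m ∈ gS x → g x ≤ m := fun x m hm => Nat.sInf_le hm
  have hgk : ∀ x, g x ≤ k := fun x => hg_le x k (hgS_ne x)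
  have hfg : ∀ x, (f x : ℕ) ≤ g x := fun x => (hg_mem x).1
  have hgu : g u = 0 := by
    have h0 : (0 : ℕ) ∈ gS u := by
      refine ⟨?_, Relation.ReflTransGen.refl⟩
      rw [hfuniq u 0 huA]
      simp
    have := hg_le u 0 h0
    omega
  have hgv : g v = k := by
    have h1 : (f v : ℕ) = k := by rw [hfuniq v (Fin.last k) hvA]; simp
    have := hfg v
    have := hgk v
    omega
  have hg_step : ∀ x y, (G.Adj x y ∨ G.Adj y x) → g y ≤ max (g x) (f y : ℕ) := by
    intro x y hxy
    apply hg_le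
    refine ⟨le_max_right _ _, ?_⟩
    refine Relation.ReflTransGen.tail (MReach.mono ?_ (hg_mem x).2) ⟨?_, ?_, hxy⟩
    · intro z hz
      simp only [Set.mem_setOf_eq] at hz ⊢
      exact le_trans hz (le_max_left _ _)
    · simp only [Set.mem_setOf_eq]
      exact le_trans (hfg x) (le_max_left _ _)
    · simp only [Set.mem_setOf_eq]
      exact le_max_right _ _
  have hg_lip : ∀ x y, (G.Adj x y ∨ G.Adj y x) → g y ≤ g x + 1 := by
    intro x y hxy
    have h1 := hg_step x y hxy
    have h2 := hflip x y hxy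
    have h3 := hfg x
    have h4 : max (g x) (f y : ℕ) ≤ g x + 1 := max_le (by omega) (by omega)
    omega
  have hg_dir : ∀ x y, (G.Adj x y ∨ G.Adj y x) → g x + 1 = g y →
      (f x : ℕ) = g x ∧ (f y : ℕ) = g y := by
    intro x y hxy he
    have h1 := hg_step x y hxy
    have hfy : (f y : ℕ) = g y := by
      rcases le_total (f y : ℕ) (g x) with hc | hc
      · have : g y ≤ g x := le_trans h1 (max_le le_rfl hc); omega
      · have : g y ≤ (f y : ℕ) := le_trans h1 (max_le (by omega) le_rfl)
        have := hfg y
        omega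
    have h4 := hflip x y hxy
    have h5 := hfg x
    exact ⟨by omega, hfy⟩
  -- the function h
  let hS : V → Set ℕ := fun x => {m | m ≤ g x ∧ MReach G {y | m ≤ g y} v x}
  have hhS0 : ∀ x, 0 ∈ hS x := by
    intro x
    refine ⟨Nat.zero_le _, ?_⟩
    exact Relation.ReflTransGen.mono
      (fun a b hab => ⟨Nat.zero_le _, Nat.zero_le _, hab⟩) _ _ (hG v x)
  have hhSbdd : ∀ x, BddAbove (hS x) := fun x => ⟨g x, fun m hm => hm.1⟩
  let hgt : V → ℕ := fun x => sSup (hS x)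
  have hh_mem : ∀ x, hgt x ∈ hS x := fun x => Nat.sSup_mem ⟨0, hhS0 x⟩ (hhSbdd x)
  have hh_ge : ∀ x m, m ∈ hS x → m ≤ hgt x := fun x m hm => le_csSup (hhSbdd x) hm
  have hhg : ∀ x, hgt x ≤ g x := fun x => (hh_mem x).1
  have hhu : hgt u = 0 := by have := hhg u; omega
  have hhv : hgt v = k := by
    have h1 : k ∈ hS v := ⟨by omega, Relation.ReflTransGen.refl⟩
    have := hh_ge v k h1
    have := hhg v
    have := hgk v
    omega
  have hh_step : ∀ x y, (G.Adj x y ∨ G.Adj y x) → min (hgt y) (g x) ≤ hgt x := by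
    intro x y hxy
    apply hh_ge
    refine ⟨min_le_right _ _, ?_⟩
    refine Relation.ReflTransGen.tail (MReach.mono ?_ (hh_mem y).2) ⟨?_, ?_, hxy.symm⟩
    · intro z hz
      simp only [Set.mem_setOf_eq] at hz ⊢
      exact le_trans (min_le_left _ _) hz
    · simp only [Set.mem_setOf_eq]
      exact le_trans (min_le_left _ _) (hhg y)
    · simp only [Set.mem_setOf_eq]
      exact min_le_right _ _
  have hh_lip : ∀ x y, (G.Adj x y ∨ G.Adj y x) → hgt y ≤ hgt x + 1 := by
    intro x y hxy
    have h1 := hh_step x y hxy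
    have h2 := hg_lip x y hxy
    have h3 := hhg y
    rcases le_total (hgt y) (g x) with hc | hc
    · rw [min_eq_left hc] at h1; omega
    · rw [min_eq_right hc] at h1; omega
  have hh_dir : ∀ x y, (G.Adj x y ∨ G.Adj y x) → hgt x + 1 = hgt y →
      (f x : ℕ) = hgt x ∧ (f y : ℕ) = hgt y := by
    intro x y hxy he
    have h1 := hh_step x y hxy
    have hgx : g x = hgt x := by
      have hx1 := hhg x
      rcases le_total (hgt y) (g x) with hc | hc
      · rw [min_eq_left hc] at h1; omega
      · rw [min_eq_right hc] at h1; omega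
    have hgy : g y = hgt y := by
      have := hg_lip x y hxy
      have := hhg y
      omega
    have hd := hg_dir x y hxy (by omega)
    omega
  -- connectivity lemmas
  have hP1 : ∀ (c : ℕ) (x : V), g x ≤ c → MReach G {y | g y ≤ c} u x := by
    intro c x hx
    have hw : MReach G {y | (f y : ℕ) ≤ c} u x :=
      MReach.mono (fun z hz => le_trans hz hx) (hg_mem x).2
    clear hx
    induction hw with
    | refl => exact .refl
    | @tail b w hwb hstep ih =>
      refine ih.tail ⟨?_, ?_, hstep.2.2⟩
      · exact hg_le b c ⟨hstep.1, hwb⟩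
      · exact hg_le w c ⟨hstep.2.1, hwb.tail hstep⟩
  have hP2 : ∀ (c : ℕ) (x : V), g x ≤ c → MReach G {y | hgt y ≤ c} u x :=
    fun c x hx => MReach.mono (fun z hz => le_trans (hhg z) hz) (hP1 c x hx)
  have hP3 : ∀ (c : ℕ) (x : V), c ≤ hgt x → MReach G {y | c ≤ hgt y} v x := by
    intro c x hx
    have hw : MReach G {y | c ≤ g y} v x :=
      MReach.mono (fun z hz => le_trans hx hz) (hh_mem x).2
    clear hx
    induction hw with
    | refl => exact .refl
    | @tail b w hwb hstep ih =>
      refine ih.tail ⟨?_, ?_, hstep.2.2⟩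
      · exact hh_ge b c ⟨hstep.1, hwb⟩
      · exact hh_ge w c ⟨hstep.2.1, hwb.tail hstep⟩
  have hK : ∀ (c : ℕ) (x y : V), (G.Adj x y ∨ G.Adj y x) →
      hgt x ≤ c → c < g x → c < g y → hgt y ≤ c := by
    intro c x y hxy hhx hgx hgy
    by_contra hlt
    push_neg at hlt
    have hin : c + 1 ∈ hS x := by
      refine ⟨by omega, ?_⟩
      refine Relation.ReflTransGen.tail
        (MReach.mono (fun z hz => by simp only [Set.mem_setOf_eq] at hz ⊢; omega)
          (hh_mem y).2)
        ⟨by simp only [Set.mem_setOf_eq]; omega, by simp only [Set.mem_setOf_eq]; omega,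
          hxy.symm⟩
    have := hh_ge x _ hin
    omega
  have hP4' : ∀ (c m : ℕ) (x : V), MReach G {y | g y ≤ m} u x →
      hgt x ≤ c → MReach G {y | hgt y ≤ c} x u := by
    intro c m x hw
    induction hw with
    | refl => intro _; exact .refl
    | @tail b w hwb hstep ih =>
      intro hx
      rcases le_or_gt (g w) c with hc | hc
      · exact (hP2 c w hc).symm
      · have hbc : hgt b ≤ c := by
          rcases le_or_gt (g b) c with hb | hb
          · exact le_trans (hhg b) hb
          · exact hK c w b hstep.2.2.symm hx hc hb
        exact Relation.ReflTransGen.head ⟨hx, hbc, hstep.2.2.symm⟩ (ih hbc)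
  have hP4 : ∀ (c : ℕ) (x : V), hgt x ≤ c → MReach G {y | hgt y ≤ c} x u :=
    fun c x hx => hP4' c (g x) x (hP1 (g x) x le_rfl) hx
  -- the new multicut
  refine ⟨fun j => {x | hgt x = (j : ℕ)}, ⟨?_, ?_, ?_, ?_, ?_, ?_⟩, ?_⟩
  · intro i j hne
    rw [Set.disjoint_left]
    intro x hxi hxj
    simp only [Set.mem_setOf_eq] at hxi hxj
    exact hne (Fin.ext (by omega))
  · apply Set.eq_univ_iff_forall.mpr
    intro x
    refine Set.mem_iUnion.mpr ⟨⟨hgt x, by have := hhg x; have := hgk x; omega⟩, rfl⟩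
  · simpa using hhu
  · simpa using hhv
  · intro i j hij x hx y hy
    simp only [Set.mem_setOf_eq] at hx hy
    constructor
    · intro hadj
      have := hh_lip x y (Or.inl hadj)
      omega
    · intro hadj
      have := hh_lip x y (Or.inr hadj)
      omega
  · intro i x hx y hy
    simp only [Set.mem_setOf_eq, Fin.coe_castSucc, Fin.val_succ] at hx hy
    have key : ∀ (hxy : G.Adj x y ∨ G.Adj y x), x ∈ A i.castSucc ∧ y ∈ A i.succ := by
      intro hxy
      obtain ⟨hfx, hfy⟩ := hh_dir x y hxy (by omega)
      constructor
      · have := hf x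
        rwa [show f x = i.castSucc from Fin.ext (by simp [Fin.coe_castSucc]; omega)] at this
      · have := hf y
        rwa [show f y = i.succ from Fin.ext (by simp [Fin.val_succ]; omega)] at this
    constructor
    · intro hpi hadj
      obtain ⟨hxA, hyA⟩ := key (Or.inr hadj)
      exact (hdir i x hxA y hyA).1 hpi hadj
    · intro hpi hadj
      obtain ⟨hxA, hyA⟩ := key (Or.inl hadj)
      exact (hdir i x hxA y hyA).2 hpi hadj
  · intro i
    constructor
    · have hSeq : {x | ∃ j : Fin (k+1), (j : ℕ) ≤ (i : ℕ) ∧ x ∈ {x | hgt x = (j : ℕ)}}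
          = {x | hgt x ≤ (i : ℕ)} := by
        ext x
        simp only [Set.mem_setOf_eq]
        constructor
        · rintro ⟨j, hj, hxj⟩; omega
        · intro hx
          exact ⟨⟨hgt x, by have := hhg x; have := hgk x; omega⟩, hx, rfl⟩
      rw [hSeq]
      intro x hx y hy
      simp only [Set.mem_setOf_eq] at hx hy
      exact Relation.ReflTransGen.trans (hP4 (i : ℕ) x hx) (hP4 (i : ℕ) y hy).symm
    · have hSeq : {x | ∃ j : Fin (k+1), (i : ℕ) < (j : ℕ) ∧ x ∈ {x | hgt x = (j : ℕ)}}
          = {x | (i : ℕ) + 1 ≤ hgt x} := by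
        ext x
        simp only [Set.mem_setOf_eq]
        constructor
        · rintro ⟨j, hj, hxj⟩; omega
        · intro hx
          exact ⟨⟨hgt x, by have := hhg x; have := hgk x; omega⟩, hx, rfl⟩
      rw [hSeq]
      intro x hx y hy
      simp only [Set.mem_setOf_eq] at hx hy
      exact Relation.ReflTransGen.trans (hP3 ((i : ℕ)+1) x hx).symm (hP3 ((i : ℕ)+1) y hy)
end

section
/- Let P be a path between vertices u and v in a digraph, and let π = (π₁,…,πₖ) be an alternating pattern. Then exactly one of the following holds: (1) P admits a (u,v)-multicut with pattern π; (2) there is a (−π)-concatenation for (P,u,v). -/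
namespace MulticutAux

def rho (a : Bool) (s : ℕ) : Bool := if s % 2 = 1 then !a else a

lemma rho_eq_iff (a : Bool) (s t : ℕ) : rho a s = rho a t ↔ s % 2 = t % 2 := by
  unfold rho
  rcases Nat.mod_two_eq_zero_or_one s with hs | hs <;>
    rcases Nat.mod_two_eq_zero_or_one t with ht | ht <;>
      simp [hs, ht]

lemma rho_succ (a : Bool) (s : ℕ) : rho a (s+1) = !(rho a s) := by
  unfold rho
  rcases Nat.mod_two_eq_zero_or_one s with hs | hs <;>
    simp [Nat.add_mod, hs]

lemma rho_two (a : Bool) (s : ℕ) : rho a (s+2) = rho a s := by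
  rw [rho_eq_iff]; omega

def sfun (a : Bool) (d : ℕ → Bool) : ℕ → ℕ
  | 0 => 0
  | j+1 =>
      if 1 ≤ sfun a d j ∧ rho a (sfun a d j) = d j then sfun a d j
      else if rho a (sfun a d j + 1) = d j then sfun a d j + 1 else sfun a d j + 2

lemma sfun_succ_def (a : Bool) (d : ℕ → Bool) (j : ℕ) :
    sfun a d (j+1) =
      if 1 ≤ sfun a d j ∧ rho a (sfun a d j) = d j then sfun a d j
      else if rho a (sfun a d j + 1) = d j then sfun a d j + 1 else sfun a d j + 2 := rfl

lemma one_le_sfun_succ (a : Bool) (d : ℕ → Bool) (j : ℕ) : 1 ≤ sfun a d (j+1) := by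
  rw [sfun_succ_def]; split_ifs with h1 h2 <;> omega

lemma sfun_le_succ (a : Bool) (d : ℕ → Bool) (j : ℕ) : sfun a d j ≤ sfun a d (j+1) := by
  rw [sfun_succ_def]; split_ifs with h1 h2 <;> omega

lemma sfun_mono (a : Bool) (d : ℕ → Bool) : Monotone (sfun a d) :=
  monotone_nat_of_le_succ (sfun_le_succ a d)

lemma rho_sfun_succ (a : Bool) (d : ℕ → Bool) (j : ℕ) :
    rho a (sfun a d (j+1)) = d j := by
  rw [sfun_succ_def]
  split_ifs with h1 h2
  · exact h1.2
  · exact h2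
  · rw [show sfun a d j + 2 = (sfun a d j + 1) + 1 from rfl, rho_succ]
    cases hd : d j <;> cases hr : rho a (sfun a d j + 1) <;> simp_all

lemma sfun_min (a : Bool) (d : ℕ → Bool) (j : ℕ) {s' : ℕ} (h1 : 1 ≤ s')
    (h2 : sfun a d j ≤ s') (h3 : rho a s' = d j) : sfun a d (j+1) ≤ s' := by
  rw [sfun_succ_def]
  split_ifs with ha hb
  · exact h2
  · rcases Nat.lt_or_ge s' (sfun a d j + 1) with h | h
    · exfalso; have hsj : s' = sfun a d j := by omega
      exact ha ⟨by omega, by rw [← hsj]; exact h3⟩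
    · exact h
  · rcases Nat.lt_or_ge s' (sfun a d j + 2) with h | h
    · exfalso
      have h' : s' = sfun a d j ∨ s' = sfun a d j + 1 := by omega
      rcases h' with h' | h'
      · exact ha ⟨by omega, by rw [← h']; exact h3⟩
      · exact hb (by rw [← h']; exact h3)
    · exact h

lemma sfun_succ_le_two (a : Bool) (d : ℕ → Bool) (j : ℕ) :
    sfun a d (j+1) ≤ sfun a d j + 2 := by
  rw [sfun_succ_def]; split_ifs <;> omega

lemma sfun_succ_le_of_pos (a : Bool) (d : ℕ → Bool) (j : ℕ) (h : 1 ≤ sfun a d j) :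
    sfun a d (j+1) ≤ sfun a d j + 1 := by
  rw [sfun_succ_def]
  split_ifs with h1 h2
  · omega
  · omega
  · exfalso
    have hne : rho a (sfun a d j) ≠ d j := fun hc => h1 ⟨h, hc⟩
    rw [rho_succ] at h2
    cases hd : d j <;> cases hr : rho a (sfun a d j) <;> simp_all

lemma one_le_sfun (a : Bool) (d : ℕ → Bool) {j : ℕ} (h : 1 ≤ j) : 1 ≤ sfun a d j := by
  obtain ⟨j', rfl⟩ := Nat.exists_eq_add_of_le h
  rw [Nat.add_comm]; exact one_le_sfun_succ a d j'

end MulticutAux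




/-- Theorem 4.3 (`alternatingcase`): for a path `P` between `u` and `v` and an
alternating pattern `π`, exactly one of the following holds: `P` admits a
`(u,v)`-multicut with pattern `π`, or there is a `(−π)`-concatenation for `(P,u,v)`. -/
theorem multicut_xor_concat {V : Type} (G : Digraph V) (u v : V) (huv : u ≠ v)
    (P : DiPath G u v) (k : ℕ) (hk : 0 < k) (π : Fin k → Bool) (halt : AltPat k π) :
    Xor' (∃ A : Fin (k+1) → Set (Fin (P.n+1)),
            IsMulticut P.digraph 0 (Fin.last P.n) k A π)
         (∃ q : Fin (k+1) → Fin (P.n+1), IsConcat P k q (fun i => ! π i)) := by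
  classical
  set a := π ⟨0, hk⟩ with ha
  set d : ℕ → Bool := fun i => if h : i < P.n then P.dir ⟨i, h⟩ else false with hd
  set S : ℕ → ℕ := MulticutAux.sfun a d with hSdef
  have hpi : ∀ (i : ℕ) (h : i < k), π ⟨i, h⟩ = MulticutAux.rho a i := by
    intro i
    induction i with
    | zero => intro h; simp [MulticutAux.rho, ha]
    | succ i ih =>
      intro h
      rw [halt i h, ih (by omega), MulticutAux.rho_succ]
  have hdval : ∀ (m : Fin P.n), d (m : ℕ) = P.dir m := by
    intro m
    show (if h : (m : ℕ) < P.n then P.dir ⟨(m : ℕ), h⟩ else false) = P.dir m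
    rw [dif_pos m.isLt]
  have hS0 : S 0 = 0 := rfl
  have hSmono : ∀ {i j : ℕ}, i ≤ j → S i ≤ S j := fun h => MulticutAux.sfun_mono a d h
  by_cases hcase : S P.n ≤ k
  · -- concatenation exists, multicut doesn't
    right
    constructor
    · -- build concatenation
      set qn : ℕ → ℕ := fun t => Nat.findGreatest (fun j => S j ≤ t) P.n with hqn
      have hqn_le : ∀ t, qn t ≤ P.n := fun t => Nat.findGreatest_le P.n
      have hqn_spec : ∀ t, S (qn t) ≤ t := by
        intro t
        exact Nat.findGreatest_spec (P := fun j => S j ≤ t) (Nat.zero_le P.n)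
          (show S 0 ≤ t by rw [hS0]; exact Nat.zero_le t)
      have hqn_mono : ∀ {t t' : ℕ}, t ≤ t' → qn t ≤ qn t' := by
        intro t t' h
        exact Nat.le_findGreatest (hqn_le t) (le_trans (hqn_spec t) h)
      have hqn_gt : ∀ t j, qn t < j → j ≤ P.n → t < S j := by
        intro t j h1 h2
        have := Nat.findGreatest_is_greatest (P := fun j => S j ≤ t) h1 h2
        omega
      refine ⟨fun t => ⟨qn (t : ℕ), by have := hqn_le (t : ℕ); omega⟩, ?_, ?_, ?_, ?_⟩
      · intro s t hst
        exact Fin.mk_le_mk.mpr (hqn_mono (Fin.le_def.mp hst))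
      · apply Fin.ext
        show qn ((0 : Fin (k+1)) : ℕ) = ((0 : Fin (P.n+1)) : ℕ)
        rw [Fin.val_zero, Fin.val_zero]
        by_contra h
        have h1 : 1 ≤ qn 0 := by omega
        have h2 := MulticutAux.one_le_sfun a d h1
        rw [← hSdef] at h2
        have h3 := hqn_spec 0
        omega
      · apply Fin.ext
        show qn ((Fin.last k : Fin (k+1)) : ℕ) = ((Fin.last P.n : Fin (P.n+1)) : ℕ)
        rw [Fin.val_last, Fin.val_last]
        exact le_antisymm (hqn_le _) (Nat.le_findGreatest le_rfl hcase)
      · intro s i h1 h2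
        show P.dir i = !π s
        simp only [Fin.coe_castSucc, Fin.val_succ] at h1 h2
        have hi1 : (i : ℕ) + 1 ≤ qn ((s : ℕ) + 1) := h2
        have hB1 : S ((i : ℕ) + 1) ≤ (s : ℕ) + 1 := le_trans (hSmono hi1) (hqn_spec _)
        have hB2 : (s : ℕ) < S ((i : ℕ) + 1) :=
          hqn_gt (s : ℕ) ((i : ℕ) + 1) (by omega) (by have := i.isLt; omega)
        have hSeq : S ((i : ℕ) + 1) = (s : ℕ) + 1 := by omega
        have hrs := MulticutAux.rho_sfun_succ a d (i : ℕ)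
        rw [← hSdef] at hrs
        rw [hSeq] at hrs
        have hps : π s = MulticutAux.rho a (s : ℕ) := by
          have := hpi (s : ℕ) s.isLt
          rwa [Fin.eta] at this
        rw [← hdval i, ← hrs, MulticutAux.rho_succ, hps]
    · -- no multicut
      rintro ⟨A, hdisj, hcover, hu, hv, hfar, hnear⟩
      have hex : ∀ x : Fin (P.n+1), ∃ i, x ∈ A i := by
        intro x
        have hx : x ∈ ⋃ i, A i := by rw [hcover]; trivial
        exact Set.mem_iUnion.mp hx
      set cls : Fin (P.n+1) → Fin (k+1) := fun x => (hex x).choose with hcls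
      have hmem : ∀ x, x ∈ A (cls x) := fun x => (hex x).choose_spec
      have huniq : ∀ x i, x ∈ A i → cls x = i := by
        intro x i hxi
        by_contra hne
        exact Set.disjoint_left.mp (hdisj _ _ hne) (hmem x) hxi
      have hadj : ∀ m : Fin P.n,
          P.digraph.Adj m.castSucc m.succ ∨ P.digraph.Adj m.succ m.castSucc := by
        intro m
        cases hdm : P.dir m with
        | true => exact Or.inl ⟨m, Or.inl ⟨hdm, rfl, rfl⟩⟩
        | false => exact Or.inr ⟨m, Or.inr ⟨hdm, rfl, rfl⟩⟩
      have hstep : ∀ m : Fin P.n,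
          (cls m.succ : ℕ) ≤ (cls m.castSucc : ℕ) + 1 ∧
          (cls m.castSucc : ℕ) ≤ (cls m.succ : ℕ) + 1 := by
        intro m
        constructor
        · by_contra h
          have h2 : (cls m.castSucc : ℕ) + 2 ≤ (cls m.succ : ℕ) := by omega
          have hcc := hfar _ _ h2 _ (hmem m.castSucc) _ (hmem m.succ)
          rcases hadj m with h' | h'
          · exact hcc.1 h'
          · exact hcc.2 h'
        · by_contra h
          have h2 : (cls m.succ : ℕ) + 2 ≤ (cls m.castSucc : ℕ) := by omega
          have hcc := hfar _ _ h2 _ (hmem m.succ) _ (hmem m.castSucc)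
          rcases hadj m with h' | h'
          · exact hcc.2 h'
          · exact hcc.1 h'
      have hup : ∀ m : Fin P.n, (cls m.succ : ℕ) = (cls m.castSucc : ℕ) + 1 →
          P.dir m = MulticutAux.rho a (cls m.castSucc : ℕ) := by
        intro m hm
        have hlt : (cls m.castSucc : ℕ) < k := by
          have := (cls m.succ).isLt; omega
        have hxi : m.castSucc ∈ A ((⟨(cls m.castSucc : ℕ), hlt⟩ : Fin k)).castSucc := by
          have he : ((⟨(cls m.castSucc : ℕ), hlt⟩ : Fin k)).castSucc = cls m.castSucc :=
            Fin.ext (by simp)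
          rw [he]; exact hmem _
        have hyi : m.succ ∈ A ((⟨(cls m.castSucc : ℕ), hlt⟩ : Fin k)).succ := by
          have he : ((⟨(cls m.castSucc : ℕ), hlt⟩ : Fin k)).succ = cls m.succ :=
            Fin.ext (by simp [hm])
          rw [he]; exact hmem _
        have hpair := hnear _ _ hxi _ hyi
        have hdir : P.dir m = π ⟨(cls m.castSucc : ℕ), hlt⟩ := by
          cases hdm : P.dir m with
          | true =>
            have hAdj : P.digraph.Adj m.castSucc m.succ := ⟨m, Or.inl ⟨hdm, rfl, rfl⟩⟩
            cases hπ : π ⟨(cls m.castSucc : ℕ), hlt⟩ with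
            | true => rfl
            | false => exact absurd hAdj (hpair.2 hπ)
          | false =>
            have hAdj : P.digraph.Adj m.succ m.castSucc := ⟨m, Or.inr ⟨hdm, rfl, rfl⟩⟩
            cases hπ : π ⟨(cls m.castSucc : ℕ), hlt⟩ with
            | true => exact absurd hAdj (hpair.1 hπ)
            | false => rfl
        rw [hdir]
        exact hpi _ hlt
      have hinv : ∀ j : Fin (P.n+1), 1 ≤ (cls j : ℕ) → (cls j : ℕ) + 1 ≤ S (j : ℕ) := by
        intro j
        induction j using Fin.induction with
        | zero =>
          intro h1
          rw [huniq 0 0 hu] at h1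
          simp at h1
        | succ m ih =>
          intro h1
          have hb := hstep m
          have hvs : ((m.succ : Fin (P.n+1)) : ℕ) = (m : ℕ) + 1 := Fin.val_succ m
          have hvc : ((m.castSucc : Fin (P.n+1)) : ℕ) = (m : ℕ) := Fin.coe_castSucc m
          rw [hvs]
          rcases Nat.lt_trichotomy (cls m.succ : ℕ) ((cls m.castSucc : ℕ) + 1)
            with hc | hc | hc
          · have hci1 : 1 ≤ (cls m.castSucc : ℕ) := by omega
            have hih := ih hci1
            rw [hvc] at hih
            have hmo := hSmono (show (m : ℕ) ≤ (m : ℕ) + 1 by omega)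
            omega
          · have hdir := hup m hc
            have hSs := MulticutAux.rho_sfun_succ a d (m : ℕ)
            rw [← hSdef] at hSs
            have hrr : MulticutAux.rho a (S ((m : ℕ) + 1)) =
                MulticutAux.rho a (cls m.castSucc : ℕ) := by
              rw [hSs, hdval m, hdir]
            have hpar := (MulticutAux.rho_eq_iff a _ _).mp hrr
            have h1' : 1 ≤ S ((m : ℕ) + 1) := MulticutAux.one_le_sfun_succ a d (m : ℕ)
            have hmo := hSmono (show (m : ℕ) ≤ (m : ℕ) + 1 by omega)
            rcases Nat.eq_zero_or_pos (cls m.castSucc : ℕ) with h0 | h0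
            · omega
            · have hih := ih h0
              rw [hvc] at hih
              omega
          · omega
      have hlast : cls (Fin.last P.n) = Fin.last k := huniq _ _ hv
      have hfin := hinv (Fin.last P.n) (by rw [hlast]; simp [Fin.val_last]; omega)
      rw [hlast] at hfin
      simp only [Fin.val_last] at hfin
      omega
  · -- multicut exists, concatenation doesn't
    left
    constructor
    · -- build multicut
      set C : ℕ → ℕ := fun j => min k (S j - 1) with hC
      have hCle : ∀ j, C j ≤ k := fun j => Nat.min_le_left _ _
      have hC0 : C 0 = 0 := by simp only [hC, hS0]; omega
      have hCn : C P.n = k := by simp only [hC]; omega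
      have hCmono : ∀ j, C j ≤ C (j+1) := by
        intro j
        have := hSmono (show j ≤ j + 1 by omega)
        simp only [hC]; omega
      have hCstep : ∀ j, C (j+1) ≤ C j + 1 := by
        intro j
        have h2 := MulticutAux.sfun_succ_le_two a d j
        rw [← hSdef] at h2
        rcases Nat.eq_zero_or_pos (S j) with h0 | h0
        · simp only [hC]; omega
        · have h1 := MulticutAux.sfun_succ_le_of_pos a d j h0
          rw [← hSdef] at h1
          simp only [hC]; omega
      have hup2 : ∀ j, C (j+1) = C j + 1 → d j = MulticutAux.rho a (C j) := by
        intro j hcj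
        have hgj : C j + 1 ≤ k := by rw [← hcj]; exact hCle _
        have hS1 : C j + 2 ≤ S (j+1) := by
          simp only [hC] at hcj ⊢; omega
        have hS2 : S (j+1) ≤ C j + 2 := by
          rcases Nat.eq_zero_or_pos (S j) with h0 | h0
          · have h2 := MulticutAux.sfun_succ_le_two a d j
            rw [← hSdef] at h2
            simp only [hC]; omega
          · have h1 := MulticutAux.sfun_succ_le_of_pos a d j h0
            rw [← hSdef] at h1
            simp only [hC] at hcj hgj ⊢
            omega
        have hSeq : S (j+1) = C j + 2 := le_antisymm hS2 hS1
        have hrs := MulticutAux.rho_sfun_succ a d j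
        rw [← hSdef, hSeq, MulticutAux.rho_two] at hrs
        exact hrs.symm
      have hadjC : ∀ x y : Fin (P.n+1), P.digraph.Adj x y →
          C (y : ℕ) ≤ C (x : ℕ) + 1 ∧ C (x : ℕ) ≤ C (y : ℕ) + 1 := by
        rintro x y ⟨m, ⟨hdm, rfl, rfl⟩ | ⟨hdm, rfl, rfl⟩⟩
        · rw [Fin.coe_castSucc, Fin.val_succ]
          exact ⟨hCstep m, by have := hCmono (m : ℕ); omega⟩
        · rw [Fin.coe_castSucc, Fin.val_succ]
          exact ⟨by have := hCmono (m : ℕ); omega, hCstep m⟩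
      refine ⟨fun i => {x : Fin (P.n+1) | C (x : ℕ) = (i : ℕ)}, ?_, ?_, ?_, ?_, ?_, ?_⟩
      · intro i j hne
        rw [Set.disjoint_left]
        intro x hx hx'
        simp only [Set.mem_setOf_eq] at hx hx'
        exact hne (Fin.ext (by omega))
      · refine Set.eq_univ_iff_forall.mpr fun x => Set.mem_iUnion.mpr
          ⟨⟨C (x : ℕ), by have := hCle (x : ℕ); omega⟩, rfl⟩
      · show C ((0 : Fin (P.n+1)) : ℕ) = ((0 : Fin (k+1)) : ℕ)
        simp only [Fin.val_zero]
        exact hC0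
      · show C ((Fin.last P.n : Fin (P.n+1)) : ℕ) = ((Fin.last k : Fin (k+1)) : ℕ)
        simp only [Fin.val_last]
        exact hCn
      · intro i j hij x hx y hy
        simp only [Set.mem_setOf_eq] at hx hy
        constructor
        · intro hA; have := hadjC x y hA; omega
        · intro hA; have := hadjC y x hA; omega
      · intro i x hx y hy
        simp only [Set.mem_setOf_eq, Fin.coe_castSucc, Fin.val_succ] at hx hy
        constructor
        · rintro hpt ⟨m, ⟨hdm, rfl, rfl⟩ | ⟨hdm, rfl, rfl⟩⟩
          · simp only [Fin.coe_castSucc, Fin.val_succ] at hx hy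
            have := hCmono (m : ℕ); omega
          · simp only [Fin.coe_castSucc, Fin.val_succ] at hx hy
            have hdd := hup2 (m : ℕ) (by omega)
            rw [hdval m, hdm, hx] at hdd
            have hpieq : π i = MulticutAux.rho a (i : ℕ) := by
              have := hpi (i : ℕ) i.isLt
              rwa [Fin.eta] at this
            rw [hpt] at hpieq
            rw [← hpieq] at hdd
            exact Bool.noConfusion hdd
        · rintro hpf ⟨m, ⟨hdm, rfl, rfl⟩ | ⟨hdm, rfl, rfl⟩⟩
          · simp only [Fin.coe_castSucc, Fin.val_succ] at hx hy
            have hdd := hup2 (m : ℕ) (by omega)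
            rw [hdval m, hdm, hx] at hdd
            have hpieq : π i = MulticutAux.rho a (i : ℕ) := by
              have := hpi (i : ℕ) i.isLt
              rwa [Fin.eta] at this
            rw [hpf] at hpieq
            rw [← hpieq] at hdd
            exact Bool.noConfusion hdd
          · simp only [Fin.coe_castSucc, Fin.val_succ] at hx hy
            have := hCmono (m : ℕ); omega
    · -- no concatenation
      rintro ⟨q, hqmono, hq0, hqlast, hblk⟩
      have key : ∀ t, ∀ ht : t ≤ k, S ((q ⟨t, by omega⟩ : Fin (P.n+1)) : ℕ) ≤ t := by
        intro t
        induction t with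
        | zero =>
          intro ht
          have h0 : (⟨0, by omega⟩ : Fin (k+1)) = 0 := Fin.ext (by simp)
          rw [h0, hq0]
          simp only [Fin.val_zero]
          omega
        | succ t ih =>
          intro ht
          have hts : t < k := by omega
          have hcs : ((⟨t, hts⟩ : Fin k)).castSucc = (⟨t, by omega⟩ : Fin (k+1)) :=
            Fin.ext (by simp)
          have hss : ((⟨t, hts⟩ : Fin k)).succ = (⟨t+1, by omega⟩ : Fin (k+1)) :=
            Fin.ext (by simp)
          have hbase : S ((q ((⟨t, hts⟩ : Fin k)).castSucc : Fin (P.n+1)) : ℕ) ≤ t := by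
            rw [hcs]; exact ih (by omega)
          have hfin : ((q ((⟨t, hts⟩ : Fin k)).castSucc : Fin (P.n+1)) : ℕ) ≤
              ((q ((⟨t, hts⟩ : Fin k)).succ : Fin (P.n+1)) : ℕ) :=
            Fin.le_def.mp (hqmono (Fin.castSucc_le_succ _))
          have inner : ∀ md,
              ((q ((⟨t, hts⟩ : Fin k)).castSucc : Fin (P.n+1)) : ℕ) + md ≤
                ((q ((⟨t, hts⟩ : Fin k)).succ : Fin (P.n+1)) : ℕ) →
              S (((q ((⟨t, hts⟩ : Fin k)).castSucc : Fin (P.n+1)) : ℕ) + md) ≤ t + 1 := by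
            intro md
            induction md with
            | zero => intro _; simp only [Nat.add_zero]; exact le_trans hbase (by omega)
            | succ md ih2 =>
              intro hle
              have hle' : ((q ((⟨t, hts⟩ : Fin k)).castSucc : Fin (P.n+1)) : ℕ) + md ≤
                  ((q ((⟨t, hts⟩ : Fin k)).succ : Fin (P.n+1)) : ℕ) := by omega
              have hjlt : ((q ((⟨t, hts⟩ : Fin k)).castSucc : Fin (P.n+1)) : ℕ) + md < P.n := by
                have h2 := (q ((⟨t, hts⟩ : Fin k)).succ).isLt
                omega
              have hdir := hblk ⟨t, hts⟩ ⟨_, hjlt⟩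
                (show ((q ((⟨t, hts⟩ : Fin k)).castSucc : Fin (P.n+1)) : ℕ) ≤
                    ((q ((⟨t, hts⟩ : Fin k)).castSucc : Fin (P.n+1)) : ℕ) + md
                  from Nat.le_add_right _ md)
                (show ((q ((⟨t, hts⟩ : Fin k)).castSucc : Fin (P.n+1)) : ℕ) + md <
                    ((q ((⟨t, hts⟩ : Fin k)).succ : Fin (P.n+1)) : ℕ) by omega)
              have hdd : d (((q ((⟨t, hts⟩ : Fin k)).castSucc : Fin (P.n+1)) : ℕ) + md) =
                  MulticutAux.rho a (t+1) := by
                have hdv := hdval ⟨_, hjlt⟩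
                rw [hdv, hdir]
                show (!(π ⟨t, hts⟩)) = MulticutAux.rho a (t+1)
                rw [hpi t hts, ← MulticutAux.rho_succ]
              have := MulticutAux.sfun_min a d
                (((q ((⟨t, hts⟩ : Fin k)).castSucc : Fin (P.n+1)) : ℕ) + md)
                (show 1 ≤ t + 1 by omega) (by rw [← hSdef]; exact ih2 hle') hdd.symm
              rw [← hSdef] at this
              exact this
          have := inner (((q ((⟨t, hts⟩ : Fin k)).succ : Fin (P.n+1)) : ℕ) -
              ((q ((⟨t, hts⟩ : Fin k)).castSucc : Fin (P.n+1)) : ℕ)) (by omega)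
          rw [show ((q ((⟨t, hts⟩ : Fin k)).castSucc : Fin (P.n+1)) : ℕ) +
              (((q ((⟨t, hts⟩ : Fin k)).succ : Fin (P.n+1)) : ℕ) -
                ((q ((⟨t, hts⟩ : Fin k)).castSucc : Fin (P.n+1)) : ℕ)) =
              ((q ((⟨t, hts⟩ : Fin k)).succ : Fin (P.n+1)) : ℕ) by omega] at this
          rw [hss] at this
          exact this
      have hlk : (⟨k, by omega⟩ : Fin (k+1)) = Fin.last k := Fin.ext (by simp)
      have hfin := key k le_rfl
      rw [hlk, hqlast] at hfin
      simp only [Fin.val_last] at hfin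
      omega
end

section
/- Let G be a weakly connected digraph, u,v distinct vertices, π = (π₁,…,πₖ) an alternating pattern, and (A₀,…,Aₖ) a (u,v)-multicut with pattern π in G. Let P be a path between u and v such that (P,u,v) admits a π⁺⁺-concatenation, where π⁺⁺ = (−π₁,π₁,…,πₖ,−πₖ). Then for each 1 ≤ i ≤ k, P contains exactly one edge between Aᵢ₋₁ and Aᵢ. -/
/-- Auxiliary: same pattern value at equal indices. -/
theorem pi_idx {k : ℕ} (π : Fin k → Bool) {a b : ℕ} {ha : a < k} {hb : b < k}
    (h : a = b) : π ⟨a, ha⟩ = π ⟨b, hb⟩ := by subst h; rfl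

/-- Auxiliary: a level `m` is "stuck" for direction `d` if neither an up-move
(needing `π m = d`) nor a down-move (needing `π (m-1) = !d`) is possible. -/
abbrev Stuck (k : ℕ) (π : Fin k → Bool) (m : ℕ) (d : Bool) : Prop :=
  (∀ h : m < k, π ⟨m, h⟩ = ! d) ∧ (∀ (_ : 0 < m) (h : m - 1 < k), π ⟨m-1, h⟩ = d)

/-- Theorem 4.4 (`intersect`): if `(A 0, …, A k)` is a `(u,v)`-multicut with
alternating pattern `π` in the weakly connected digraph `G`, and `P` is a path
between `u` and `v` admitting a `π⁺⁺`-concatenation, then for each `i`, `P` contains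
exactly one edge with one end in `A (i-1)` and the other in `A i`. -/
theorem path_meets_each_cut_once {V : Type} (G : Digraph V)
    (hG : WeaklyConnected G) (u v : V) (huv : u ≠ v)
    (k : ℕ) (hk : 0 < k) (π : Fin k → Bool) (halt : AltPat k π)
    (A : Fin (k+1) → Set V) (hA : IsMulticut G u v k A π)
    (P : DiPath G u v) (q : Fin (k+3) → Fin (P.n+1))
    (hq : IsConcat P (k+2) q (ppExt k hk π)) :
    ∀ i : Fin k, ∃! j : Fin P.n,
      (P.p j.castSucc ∈ A i.castSucc ∧ P.p j.succ ∈ A i.succ) ∨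
      (P.p j.castSucc ∈ A i.succ ∧ P.p j.succ ∈ A i.castSucc) := by
  classical
  obtain ⟨hdisj, hcover, hu, hv, hfar, hdirA⟩ := hA
  obtain ⟨hmono, hq0, hqlast, hseg⟩ := hq
  -- the level function
  have hex : ∀ x : Fin (P.n+1), ∃! j : Fin (k+1), P.p x ∈ A j := by
    intro x
    have hx : P.p x ∈ ⋃ i, A i := by rw [hcover]; trivial
    obtain ⟨j, hj⟩ := Set.mem_iUnion.1 hx
    refine ⟨j, hj, fun j' hj' => ?_⟩
    by_contra hne
    exact Set.disjoint_left.mp (hdisj j' j hne) hj' hj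
  choose f hf hfu using hex
  have hf0 : f 0 = 0 := (hfu 0 0 (by rw [P.first]; exact hu)).symm
  have hflast : f (Fin.last P.n) = Fin.last k :=
    (hfu _ _ (by rw [P.last]; exact hv)).symm
  have haltn : ∀ (m : ℕ) (h1 : m < k) (h2 : m+1 < k), π ⟨m+1, h2⟩ = ! π ⟨m, h1⟩ :=
    fun m _ h2 => halt m h2
  -- levels of adjacent path vertices differ by at most one
  have hadjSome : ∀ i : Fin P.n,
      G.Adj (P.p i.castSucc) (P.p i.succ) ∨ G.Adj (P.p i.succ) (P.p i.castSucc) := by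
    intro i
    rcases Bool.eq_false_or_eq_true (P.dir i) with h | h
    · exact Or.inl ((P.adj i).1 h)
    · exact Or.inr ((P.adj i).2 h)
  have hstep : ∀ i : Fin P.n,
      (f i.succ : ℕ) ≤ (f i.castSucc : ℕ) + 1 ∧ (f i.castSucc : ℕ) ≤ (f i.succ : ℕ) + 1 := by
    intro i
    constructor
    · by_contra h
      push_neg at h
      have h2 := hfar (f i.castSucc) (f i.succ) (by omega) _ (hf _) _ (hf _)
      rcases hadjSome i with h' | h'
      · exact h2.1 h'
      · exact h2.2 h'
    · by_contra h
      push_neg at h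
      have h2 := hfar (f i.succ) (f i.castSucc) (by omega) _ (hf _) _ (hf _)
      rcases hadjSome i with h' | h'
      · exact h2.2 h'
      · exact h2.1 h'
  -- direction of crossing edges
  have hup : ∀ (i : Fin P.n) (hc : (f i.castSucc : ℕ) < k),
      (f i.succ : ℕ) = (f i.castSucc : ℕ) + 1 → P.dir i = π ⟨(f i.castSucc : ℕ), hc⟩ := by
    intro i hc h
    have h1 : P.p i.castSucc ∈ A (Fin.castSucc ⟨(f i.castSucc : ℕ), hc⟩) := by
      rw [show Fin.castSucc ⟨(f i.castSucc : ℕ), hc⟩ = f i.castSucc from Fin.ext rfl]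
      exact hf _
    have h2 : P.p i.succ ∈ A (Fin.succ ⟨(f i.castSucc : ℕ), hc⟩) := by
      rw [show Fin.succ ⟨(f i.castSucc : ℕ), hc⟩ = f i.succ from
        Fin.ext (show (f i.castSucc : ℕ) + 1 = (f i.succ : ℕ) from h.symm)]
      exact hf _
    have h3 := hdirA ⟨(f i.castSucc : ℕ), hc⟩ _ h1 _ h2
    rcases Bool.eq_false_or_eq_true (P.dir i) with hd | hd <;>
      rcases Bool.eq_false_or_eq_true (π ⟨(f i.castSucc : ℕ), hc⟩) with hp | hp
    · simp [hd, hp]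
    · exact absurd ((P.adj i).1 hd) (h3.2 hp)
    · exact absurd ((P.adj i).2 hd) (h3.1 hp)
    · simp [hd, hp]
  have hdown : ∀ (i : Fin P.n) (hc : (f i.succ : ℕ) < k),
      (f i.castSucc : ℕ) = (f i.succ : ℕ) + 1 → P.dir i = ! π ⟨(f i.succ : ℕ), hc⟩ := by
    intro i hc h
    have h1 : P.p i.succ ∈ A (Fin.castSucc ⟨(f i.succ : ℕ), hc⟩) := by
      rw [show Fin.castSucc ⟨(f i.succ : ℕ), hc⟩ = f i.succ from Fin.ext rfl]
      exact hf _
    have h2 : P.p i.castSucc ∈ A (Fin.succ ⟨(f i.succ : ℕ), hc⟩) := by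
      rw [show Fin.succ ⟨(f i.succ : ℕ), hc⟩ = f i.castSucc from
        Fin.ext (show (f i.succ : ℕ) + 1 = (f i.castSucc : ℕ) from h.symm)]
      exact hf _
    have h3 := hdirA ⟨(f i.succ : ℕ), hc⟩ _ h1 _ h2
    rcases Bool.eq_false_or_eq_true (P.dir i) with hd | hd <;>
      rcases Bool.eq_false_or_eq_true (π ⟨(f i.succ : ℕ), hc⟩) with hp | hp
    · exact absurd ((P.adj i).1 hd) (h3.1 hp)
    · simp [hd, hp]
    · simp [hd, hp]
    · exact absurd ((P.adj i).2 hd) (h3.2 hp)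
  -- stuck levels don't move
  have noMove : ∀ i : Fin P.n, Stuck k π ((f i.castSucc : ℕ)) (P.dir i) →
      f i.succ = f i.castSucc := by
    intro i hst
    rcases Nat.lt_trichotomy ((f i.succ : ℕ)) ((f i.castSucc : ℕ)) with hlt | heq | hgt
    · have h : (f i.castSucc : ℕ) = (f i.succ : ℕ) + 1 := by have := (hstep i).2; omega
      have hc : (f i.succ : ℕ) < k := by have := (f i.castSucc).isLt; omega
      have hd := hdown i hc h
      have h2 : π ⟨(f i.succ : ℕ), hc⟩ = P.dir i :=
        (pi_idx π (by omega)).trans (hst.2 (by omega) (by omega))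
      rw [h2] at hd
      exact absurd hd (by cases P.dir i <;> simp)
    · exact Fin.ext heq
    · have h : (f i.succ : ℕ) = (f i.castSucc : ℕ) + 1 := by have := (hstep i).1; omega
      have hc : (f i.castSucc : ℕ) < k := by have := (f i.succ).isLt; omega
      have hd := hup i hc h
      have h2 := hst.1 hc
      rw [h2] at hd
      exact absurd hd (by cases P.dir i <;> simp)
  -- after any move, the new level is stuck
  have afterMove : ∀ i : Fin P.n, f i.succ ≠ f i.castSucc →
      Stuck k π ((f i.succ : ℕ)) (P.dir i) := by
    intro i hne
    rcases Nat.lt_trichotomy ((f i.succ : ℕ)) ((f i.castSucc : ℕ)) with hlt | heq | hgt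
    · have h : (f i.castSucc : ℕ) = (f i.succ : ℕ) + 1 := by have := (hstep i).2; omega
      have hc : (f i.succ : ℕ) < k := by have := (f i.castSucc).isLt; omega
      have hd := hdown i hc h
      constructor
      · intro h'
        rw [hd]
        simp
      · intro h0 hb
        rw [hd]
        rw [show π ⟨(f i.succ : ℕ), hc⟩ = ! π ⟨(f i.succ : ℕ)-1, hb⟩ from
          (pi_idx π (by omega)).trans (haltn ((f i.succ : ℕ)-1) hb (by omega))]
        simp
    · exact absurd (Fin.ext heq) hne
    · have h : (f i.succ : ℕ) = (f i.castSucc : ℕ) + 1 := by have := (hstep i).1; omega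
      have hc : (f i.castSucc : ℕ) < k := by have := (f i.succ).isLt; omega
      have hd := hup i hc h
      constructor
      · intro h'
        rw [hd]
        exact (pi_idx π h).trans (haltn ((f i.castSucc : ℕ)) hc (by omega))
      · intro h0 hb
        rw [hd]
        exact pi_idx π (by omega)
  -- a stuck level persists through the rest of a segment
  have persist : ∀ (s : Fin (k+2)) (x : Fin (P.n+1)), (q s.castSucc : ℕ) ≤ (x : ℕ) →
      Stuck k π ((f x : ℕ)) (ppExt k hk π s) →
      ∀ (m : ℕ), ∀ _h : (x : ℕ) + m ≤ (q s.succ : ℕ),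
      f (⟨(x : ℕ) + m, by have := (q s.succ).isLt; omega⟩ : Fin (P.n+1)) = f x := by
    intro s x hx hst m
    induction m with
    | zero =>
      intro h
      exact congrArg f (Fin.ext (by simp))
    | succ m ih =>
      intro h
      have hy := ih (by omega)
      have hlt : (x : ℕ) + m < P.n := by have := (q s.succ).isLt; omega
      have hfc : f (Fin.castSucc ⟨(x : ℕ) + m, hlt⟩) = f x := hy
      have hd : P.dir ⟨(x : ℕ) + m, hlt⟩ = ppExt k hk π s :=
        hseg s ⟨(x : ℕ) + m, hlt⟩ (show (q s.castSucc : ℕ) ≤ (x : ℕ) + m by omega)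
          (show (x : ℕ) + m < (q s.succ : ℕ) by omega)
      have hnm : f (Fin.succ ⟨(x : ℕ) + m, hlt⟩) = f (Fin.castSucc ⟨(x : ℕ) + m, hlt⟩) :=
        noMove ⟨(x : ℕ) + m, hlt⟩ (by rw [hfc, hd]; exact hst)
      exact hnm.trans hfc
  -- no moves means constant level
  have const : ∀ (x : Fin (P.n+1)) (m : ℕ), ∀ _h : (x : ℕ) + m ≤ P.n,
      (∀ j : Fin P.n, (x : ℕ) ≤ (j : ℕ) → (j : ℕ) < (x : ℕ) + m → f j.succ = f j.castSucc) →
      f (⟨(x : ℕ) + m, by omega⟩ : Fin (P.n+1)) = f x := by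
    intro x m
    induction m with
    | zero =>
      intro h _
      exact congrArg f (Fin.ext (by simp))
    | succ m ih =>
      intro h hnm
      have hy := ih (by omega) (fun j hj1 hj2 => hnm j hj1 (by omega))
      have hlt : (x : ℕ) + m < P.n := by omega
      have h2 : f (Fin.succ ⟨(x : ℕ) + m, hlt⟩) = f (Fin.castSucc ⟨(x : ℕ) + m, hlt⟩) :=
        hnm ⟨(x : ℕ) + m, hlt⟩ (show (x : ℕ) ≤ (x : ℕ) + m by omega)
          (show (x : ℕ) + m < (x : ℕ) + (m + 1) by omega)
      exact h2.trans hy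
  -- structure of a segment: either no move at all, or exactly one move
  have segStruct : ∀ s : Fin (k+2),
      ((f (q s.succ) = f (q s.castSucc)) ∧ ∀ j : Fin P.n, (q s.castSucc : ℕ) ≤ (j : ℕ) →
          (j : ℕ) < (q s.succ : ℕ) → f j.succ = f j.castSucc) ∨
      (∃ jm : Fin P.n, ((q s.castSucc : ℕ) ≤ (jm : ℕ) ∧ (jm : ℕ) < (q s.succ : ℕ)) ∧
        f jm.castSucc = f (q s.castSucc) ∧ f jm.succ = f (q s.succ) ∧
        f jm.succ ≠ f jm.castSucc ∧
        ∀ j : Fin P.n, (q s.castSucc : ℕ) ≤ (j : ℕ) → (j : ℕ) < (q s.succ : ℕ) →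
          f j.succ ≠ f j.castSucc → j = jm) := by
    intro s
    have hab : (q s.castSucc : ℕ) ≤ (q s.succ : ℕ) := hmono (Fin.castSucc_le_succ s)
    by_cases hmv : ∃ nn : ℕ, ∃ hh : nn < P.n,
        ((q s.castSucc : ℕ) ≤ nn ∧ nn < (q s.succ : ℕ)) ∧
        f (⟨nn, hh⟩ : Fin P.n).succ ≠ f (⟨nn, hh⟩ : Fin P.n).castSucc
    · right
      obtain ⟨hn0lt, ⟨hge, hltb⟩, hmv0⟩ := Nat.find_spec hmv
      set n0 := Nat.find hmv with hn0
      refine ⟨⟨n0, hn0lt⟩, ⟨hge, hltb⟩, ?_, ?_, hmv0, ?_⟩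
      · -- level before the move is the segment's start level
        have hc := const (q s.castSucc) (n0 - (q s.castSucc : ℕ)) (by omega)
          (fun j hj1 hj2 => by
            by_contra hne
            have hjlt : (j : ℕ) < n0 := by omega
            exact (Nat.find_min hmv hjlt) ⟨j.isLt, ⟨hj1, by omega⟩, hne⟩)
        exact (congrArg f (Fin.ext (show ((Fin.castSucc ⟨n0, hn0lt⟩ : Fin (P.n+1)) : ℕ) =
          (q s.castSucc : ℕ) + (n0 - (q s.castSucc : ℕ)) by
            show n0 = _ ; omega))).trans hc
      · -- level after the move is the segment's end level
        have hstk : Stuck k π ((f (Fin.succ ⟨n0, hn0lt⟩) : ℕ)) (ppExt k hk π s) := by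
          have h1 := afterMove ⟨n0, hn0lt⟩ hmv0
          rwa [hseg s ⟨n0, hn0lt⟩ hge hltb] at h1
        have hp := persist s (Fin.succ ⟨n0, hn0lt⟩)
          (show (q s.castSucc : ℕ) ≤ n0 + 1 by omega) hstk
          ((q s.succ : ℕ) - (n0 + 1))
          (show n0 + 1 + ((q s.succ : ℕ) - (n0 + 1)) ≤ (q s.succ : ℕ) by omega)
        exact ((congrArg f (Fin.ext (show ((q s.succ) : ℕ) =
          ((Fin.succ ⟨n0, hn0lt⟩ : Fin (P.n+1)) : ℕ) + ((q s.succ : ℕ) - (n0 + 1)) by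
            show _ = n0 + 1 + _ ; omega))).trans hp).symm
      · -- uniqueness of the move
        intro j hj1 hj2 hne
        rcases Nat.lt_trichotomy (j : ℕ) n0 with hlt | heq | hgt
        · exact absurd (⟨j.isLt, ⟨hj1, hj2⟩, hne⟩ :
            ∃ hh : (j : ℕ) < P.n, ((q s.castSucc : ℕ) ≤ (j : ℕ) ∧ (j : ℕ) < (q s.succ : ℕ)) ∧
              f (⟨(j : ℕ), hh⟩ : Fin P.n).succ ≠ f (⟨(j : ℕ), hh⟩ : Fin P.n).castSucc)
            (Nat.find_min hmv hlt)
        · exact Fin.ext heq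
        · exfalso
          have hstk : Stuck k π ((f (Fin.succ ⟨n0, hn0lt⟩) : ℕ)) (ppExt k hk π s) := by
            have h1 := afterMove ⟨n0, hn0lt⟩ hmv0
            rwa [hseg s ⟨n0, hn0lt⟩ hge hltb] at h1
          have hp := persist s (Fin.succ ⟨n0, hn0lt⟩)
            (show (q s.castSucc : ℕ) ≤ n0 + 1 by omega) hstk
            ((j : ℕ) - (n0 + 1))
            (show n0 + 1 + ((j : ℕ) - (n0 + 1)) ≤ (q s.succ : ℕ) by omega)
          have hfc : f j.castSucc = f (Fin.succ ⟨n0, hn0lt⟩) :=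
            (congrArg f (Fin.ext (show ((Fin.castSucc j : Fin (P.n+1)) : ℕ) =
              ((Fin.succ ⟨n0, hn0lt⟩ : Fin (P.n+1)) : ℕ) + ((j : ℕ) - (n0 + 1)) by
                show (j : ℕ) = n0 + 1 + _ ; omega))).trans hp
          have := noMove j (by rw [hfc, hseg s j hj1 hj2]; exact hstk)
          exact hne this
    · left
      push_neg at hmv
      constructor
      · have hc := const (q s.castSucc) ((q s.succ : ℕ) - (q s.castSucc : ℕ))
          (by have := (q s.succ).isLt; omega)
          (fun j hj1 hj2 => hmv (j : ℕ) j.isLt ⟨hj1, by omega⟩)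
        exact (congrArg f (Fin.ext (show ((q s.succ) : ℕ) =
          (q s.castSucc : ℕ) + ((q s.succ : ℕ) - (q s.castSucc : ℕ)) by omega))).trans hc
      · exact fun j hj1 hj2 => hmv (j : ℕ) j.isLt ⟨hj1, hj2⟩
  -- values of the extended pattern at the ends
  have hrho0 : ppExt k hk π 0 = ! π ⟨0, hk⟩ := by
    simp only [ppExt]
    rw [dif_neg (by simp), if_pos (by simp)]
  have hrholast : ppExt k hk π ⟨k+1, by omega⟩ = ! π ⟨k-1, by omega⟩ := by
    simp only [ppExt]
    rw [dif_neg (show ¬(1 ≤ k+1 ∧ k+1 ≤ k) by omega), if_neg (show ¬(k+1 = 0) by omega)]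
  -- segment 0 : constant at level 0
  have hq00 : q ((0 : Fin (k+2)).castSucc) = 0 := by rw [Fin.castSucc_zero]; exact hq0
  have hst0 : Stuck k π ((f (q ((0 : Fin (k+2)).castSucc)) : ℕ)) (ppExt k hk π 0) := by
    rw [hq00, hf0, hrho0]
    refine ⟨fun h => ?_, fun h0 h => ?_⟩
    · rw [Bool.not_not]
      exact pi_idx π (by simp)
    · simp at h0
  have hss0 := persist 0 (q ((0 : Fin (k+2)).castSucc)) le_rfl hst0
  have hnm0 : ∀ j : Fin P.n, (q ((0 : Fin (k+2)).castSucc) : ℕ) ≤ (j : ℕ) →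
      (j : ℕ) < (q ((0 : Fin (k+2)).succ) : ℕ) → f j.succ = f j.castSucc := by
    intro j hj1 hj2
    have hfc : f j.castSucc = f (q ((0 : Fin (k+2)).castSucc)) :=
      (congrArg f (Fin.ext (show ((Fin.castSucc j : Fin (P.n+1)) : ℕ) =
        (q ((0 : Fin (k+2)).castSucc) : ℕ) + ((j : ℕ) - (q ((0 : Fin (k+2)).castSucc) : ℕ)) by
          show (j : ℕ) = _ ; omega))).trans
        (hss0 ((j : ℕ) - (q ((0 : Fin (k+2)).castSucc) : ℕ)) (by omega))
    exact noMove j (by rw [hfc, hseg 0 j hj1 hj2]; exact hst0)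
  have hg1 : ∀ x : Fin (k+3), (x : ℕ) = 1 → (f (q x) : ℕ) = 0 := by
    intro x hx
    have he : x = (0 : Fin (k+2)).succ := Fin.ext (by simp [Fin.val_succ, hx])
    have h1 := hss0 ((q ((0 : Fin (k+2)).succ) : ℕ) - (q ((0 : Fin (k+2)).castSucc) : ℕ))
      (by have := hmono (Fin.castSucc_le_succ (0 : Fin (k+2))); omega)
    have h2 : f (q ((0 : Fin (k+2)).succ)) = f (q ((0 : Fin (k+2)).castSucc)) :=
      (congrArg f (Fin.ext (show ((q ((0 : Fin (k+2)).succ)) : ℕ) =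
        (q ((0 : Fin (k+2)).castSucc) : ℕ) +
          ((q ((0 : Fin (k+2)).succ) : ℕ) - (q ((0 : Fin (k+2)).castSucc) : ℕ)) by
        have := hmono (Fin.castSucc_le_succ (0 : Fin (k+2))); omega))).trans h1
    rw [he, h2, hq00, hf0]
    simp
  -- segment k+1 : constant at level k
  have hqsl : q ((⟨k+1, by omega⟩ : Fin (k+2)).succ) = Fin.last P.n := by
    rw [show (⟨k+1, by omega⟩ : Fin (k+2)).succ = Fin.last (k+2) from Fin.ext rfl]
    exact hqlast
  have hlastseg : f (q ((⟨k+1, by omega⟩ : Fin (k+2)).castSucc)) = Fin.last k ∧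
      ∀ j : Fin P.n, (q ((⟨k+1, by omega⟩ : Fin (k+2)).castSucc) : ℕ) ≤ (j : ℕ) →
        (j : ℕ) < (q ((⟨k+1, by omega⟩ : Fin (k+2)).succ) : ℕ) → f j.succ = f j.castSucc := by
    rcases segStruct ⟨k+1, by omega⟩ with ⟨h1, h2⟩ | ⟨jm, ⟨hb1, hb2⟩, hm1, hm2, hm3, _⟩
    · refine ⟨?_, h2⟩
      rw [hqsl, hflast] at h1
      exact h1.symm
    · exfalso
      rw [hqsl, hflast] at hm2
      have hsv : (f jm.succ : ℕ) = k := by rw [hm2]; simp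
      have hne' : (f jm.castSucc : ℕ) ≠ k := by
        intro hcc
        exact hm3 (Fin.ext (by omega))
      have hstp := (hstep jm).1
      have hcv : (f jm.castSucc : ℕ) = k - 1 := by have := (f jm.castSucc).isLt; omega
      have hc : (f jm.castSucc : ℕ) < k := by omega
      have hdd := hup jm hc (by omega)
      have hds := hseg ⟨k+1, by omega⟩ jm hb1 hb2
      rw [hrholast, hdd] at hds
      have hk1 : k - 1 < k := by omega
      have hcontr : π ⟨k-1, hk1⟩ = ! π ⟨k-1, hk1⟩ :=
        (@pi_idx k π _ _ hc hk1 hcv).symm.trans hds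
      simp at hcontr
  have hgK : ∀ x : Fin (k+3), (x : ℕ) = k+1 → (f (q x) : ℕ) = k := by
    intro x hx
    have he : x = (⟨k+1, by omega⟩ : Fin (k+2)).castSucc := Fin.ext hx
    rw [he, hlastseg.1]
    simp
  -- per-segment level change is at most one
  have segD : ∀ s : Fin (k+2), (f (q s.succ) : ℕ) ≤ (f (q s.castSucc) : ℕ) + 1 ∧
      (f (q s.castSucc) : ℕ) ≤ (f (q s.succ) : ℕ) + 1 := by
    intro s
    rcases segStruct s with ⟨h1, _⟩ | ⟨jm, _, h1, h2, _, _⟩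
    · rw [h1]; omega
    · rw [← h1, ← h2]; exact hstep jm
  -- accumulation of level changes
  have hgap : ∀ (d : ℕ) (x y : Fin (k+3)), (y : ℕ) = (x : ℕ) + d →
      (f (q y) : ℕ) ≤ (f (q x) : ℕ) + d := by
    intro d
    induction d with
    | zero =>
      intro x y hxy
      rw [show y = x from Fin.ext hxy]
      omega
    | succ d ih =>
      intro x y hxy
      have hz : (x : ℕ) + d < k + 3 := by have := y.isLt; omega
      have h1 := ih x ⟨(x : ℕ) + d, hz⟩ rfl
      have hsval : (x : ℕ) + d < k + 2 := by have := y.isLt; omega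
      have h2 := (segD ⟨(x : ℕ) + d, hsval⟩).1
      rw [show ((⟨(x : ℕ) + d, hsval⟩ : Fin (k+2)).castSucc) = (⟨(x : ℕ) + d, hz⟩ : Fin (k+3))
            from Fin.ext rfl,
          show ((⟨(x : ℕ) + d, hsval⟩ : Fin (k+2)).succ) = y from
            Fin.ext (show (x : ℕ) + d + 1 = (y : ℕ) by omega)] at h2
      omega
  -- the level at each cut vertex of the concatenation
  have hQ : ∀ x : Fin (k+3), 1 ≤ (x : ℕ) → (x : ℕ) ≤ k+1 → (f (q x) : ℕ) = (x : ℕ) - 1 := by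
    intro x h1 h2
    have hub := hgap ((x : ℕ) - 1) ⟨1, by omega⟩ x
      (show (x : ℕ) = 1 + ((x : ℕ) - 1) by omega)
    have hlb := hgap ((k+1) - (x : ℕ)) x ⟨k+1, by omega⟩
      (show k + 1 = (x : ℕ) + ((k+1) - (x : ℕ)) by omega)
    rw [hg1 ⟨1, by omega⟩ rfl] at hub
    rw [hgK ⟨k+1, by omega⟩ rfl] at hlb
    omega
  -- every edge of the path lies in some segment
  have hcov : ∀ j : Fin P.n, ∃ s : Fin (k+2),
      (q s.castSucc : ℕ) ≤ (j : ℕ) ∧ (j : ℕ) < (q s.succ : ℕ) := by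
    intro j
    have hS0 : (0 : Fin (k+3)) ∈ Finset.univ.filter (fun s : Fin (k+3) => (q s : ℕ) ≤ (j : ℕ)) := by
      simp only [Finset.mem_filter, Finset.mem_univ, true_and]
      rw [hq0]
      simp
    have hSne : (Finset.univ.filter (fun s : Fin (k+3) => (q s : ℕ) ≤ (j : ℕ))).Nonempty :=
      ⟨0, hS0⟩
    set s0 := (Finset.univ.filter (fun s : Fin (k+3) => (q s : ℕ) ≤ (j : ℕ))).max' hSne with hs0def
    have hs0 : (q s0 : ℕ) ≤ (j : ℕ) := by
      have := Finset.max'_mem _ hSne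
      simp only [Finset.mem_filter, Finset.mem_univ, true_and] at this
      exact this
    have hs0lt : (s0 : ℕ) < k+2 := by
      by_contra hcon
      have he : s0 = Fin.last (k+2) := Fin.ext (by rw [Fin.val_last]; have := s0.isLt; omega)
      rw [he, hqlast] at hs0
      have : (Fin.last P.n : ℕ) = P.n := rfl
      have := j.isLt
      omega
    refine ⟨⟨(s0 : ℕ), hs0lt⟩, ?_, ?_⟩
    · rw [show ((⟨(s0 : ℕ), hs0lt⟩ : Fin (k+2)).castSucc) = s0 from Fin.ext rfl]
      exact hs0
    · by_contra hcon
      push_neg at hcon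
      have hmem : (⟨(s0 : ℕ), hs0lt⟩ : Fin (k+2)).succ ∈
          Finset.univ.filter (fun s : Fin (k+3) => (q s : ℕ) ≤ (j : ℕ)) := by
        simp only [Finset.mem_filter, Finset.mem_univ, true_and]
        exact hcon
      have hle := Finset.le_max' _ _ hmem
      have hle2 : (s0 : ℕ) + 1 ≤ (s0 : ℕ) := hle
      omega
  -- main argument
  intro i
  set si : Fin (k+2) := ⟨(i : ℕ)+1, by have := i.isLt; omega⟩ with hsidef
  have hsivA : (f (q si.castSucc) : ℕ) = (i : ℕ) :=
    hQ si.castSucc (show 1 ≤ (i : ℕ)+1 by omega)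
      (show (i : ℕ)+1 ≤ k+1 by have := i.isLt; omega)
  have hsivB : (f (q si.succ) : ℕ) = (i : ℕ)+1 :=
    hQ si.succ (show 1 ≤ (i : ℕ)+1+1 by omega)
      (show (i : ℕ)+1+1 ≤ k+1 by have := i.isLt; omega)
  rcases segStruct si with ⟨h1, _⟩ | ⟨jm, ⟨hb1, hb2⟩, hm1, hm2, hm3, huniq⟩
  · exfalso
    have := congrArg Fin.val h1
    omega
  · have hjmA : (f jm.castSucc : ℕ) = (i : ℕ) := by rw [hm1]; exact hsivA
    have hjmB : (f jm.succ : ℕ) = (i : ℕ)+1 := by rw [hm2]; exact hsivB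
    refine ⟨jm, Or.inl ⟨?_, ?_⟩, ?_⟩
    · have he : f jm.castSucc = i.castSucc := Fin.ext (by rw [hjmA, Fin.coe_castSucc])
      have hmem := hf jm.castSucc
      rw [he] at hmem
      exact hmem
    · have he : f jm.succ = i.succ := Fin.ext (by rw [hjmB, Fin.val_succ])
      have hmem := hf jm.succ
      rw [he] at hmem
      exact hmem
    · intro j' hj'
      have hmv' : f j'.succ ≠ f j'.castSucc ∧
          (((f j'.castSucc : ℕ) = (i : ℕ) ∧ (f j'.succ : ℕ) = (i : ℕ)+1) ∨
           ((f j'.castSucc : ℕ) = (i : ℕ)+1 ∧ (f j'.succ : ℕ) = (i : ℕ))) := by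
        rcases hj' with ⟨ha1, ha2⟩ | ⟨ha1, ha2⟩
        · have e1 : f j'.castSucc = i.castSucc := (hfu _ _ ha1).symm
          have e2 : f j'.succ = i.succ := (hfu _ _ ha2).symm
          have v1 : (f j'.castSucc : ℕ) = (i : ℕ) := by rw [e1]; exact Fin.coe_castSucc i
          have v2 : (f j'.succ : ℕ) = (i : ℕ) + 1 := by rw [e2]; exact Fin.val_succ i
          refine ⟨fun hcc => ?_, Or.inl ⟨v1, v2⟩⟩
          rw [hcc] at v2
          omega
        · have e1 : f j'.castSucc = i.succ := (hfu _ _ ha1).symm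
          have e2 : f j'.succ = i.castSucc := (hfu _ _ ha2).symm
          have v1 : (f j'.castSucc : ℕ) = (i : ℕ) + 1 := by rw [e1]; exact Fin.val_succ i
          have v2 : (f j'.succ : ℕ) = (i : ℕ) := by rw [e2]; exact Fin.coe_castSucc i
          refine ⟨fun hcc => ?_, Or.inr ⟨v1, v2⟩⟩
          rw [hcc] at v2
          omega
      obtain ⟨s', hs1, hs2⟩ := hcov j'
      have hs'0 : (s' : ℕ) ≠ 0 := by
        intro h0
        have he : s' = (0 : Fin (k+2)) := Fin.ext (by simp [h0])
        rw [he] at hs1 hs2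
        exact hmv'.1 (hnm0 j' hs1 hs2)
      have hs'k : (s' : ℕ) ≠ k+1 := by
        intro h0
        have he : s' = (⟨k+1, by omega⟩ : Fin (k+2)) := Fin.ext h0
        rw [he] at hs1 hs2
        exact hmv'.1 (hlastseg.2 j' hs1 hs2)
      rcases segStruct s' with ⟨_, hnm⟩ | ⟨jm', ⟨hb1', hb2'⟩, hm1', hm2', hm3', huniq'⟩
      · exact absurd (hnm j' hs1 hs2) hmv'.1
      · have hj'm := huniq' j' hs1 hs2 hmv'.1
        have hva : (f (q s'.castSucc) : ℕ) = (s' : ℕ) - 1 :=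
          hQ s'.castSucc (show 1 ≤ (s' : ℕ) by omega)
            (show (s' : ℕ) ≤ k+1 by have := s'.isLt; omega)
        have hvb : (f (q s'.succ) : ℕ) = (s' : ℕ) :=
          hQ s'.succ (show 1 ≤ (s' : ℕ)+1 by omega)
            (show (s' : ℕ)+1 ≤ k+1 by have := s'.isLt; omega)
        have hca : (f j'.castSucc : ℕ) = (s' : ℕ) - 1 := by rw [hj'm, hm1']; exact hva
        have hcb : (f j'.succ : ℕ) = (s' : ℕ) := by rw [hj'm, hm2']; exact hvb
        have hse : s' = si := by
          rcases hmv'.2 with ⟨e1, e2⟩ | ⟨e1, e2⟩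
          · exact Fin.ext (show (s' : ℕ) = (i : ℕ) + 1 by omega)
          · exfalso
            omega
        rw [hse] at hs1 hs2
        exact huniq j' hs1 hs2 hmv'.1
end

section
/- Let G be a weakly connected digraph, u,v distinct vertices, π an alternating pattern, and suppose (A₀,…,Aₖ) is a (u,v)-multicut with pattern π in G. Let f be an edge of G such that the digraph G/f obtained by contracting f admits no (u,v)-multicut with pattern π. Then f is an edge between Aᵢ₋₁ and Aᵢ for some i; moreover there is a path P between u and v admitting a π⁺⁺-concatenation such that f is the only edge of P between Aᵢ₋₁ and Aᵢ. -/
/-- The image of a vertex `u` under contraction of the edge between `x` and `y`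
(the contracted vertex is represented by `x`). -/
def contractVert {V : Type} [DecidableEq V] (x y : V) (hxy : x ≠ y) (u : V) :
    {z : V // z ≠ y} :=
  if h : u = y then ⟨x, hxy⟩ else ⟨u, h⟩

/-- The digraph `G/f` obtained from `G` by contracting the edge `f` between `x` and
`y`: the two ends are identified (to `x`) and the contracted edge (and any loops so
created) are deleted. -/
def contractDigraph {V : Type} (G : Digraph V) (x y : V) :
    Digraph {z : V // z ≠ y} :=
  { Adj := fun a b => a ≠ b ∧ ∃ a' b' : V,
      (a' = (a : V) ∨ ((a : V) = x ∧ a' = y)) ∧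
      (b' = (b : V) ∨ ((b : V) = x ∧ b' = y)) ∧ G.Adj a' b' }

namespace CEIC

open Classical

variable {V : Type}

/-- Slot function: the `π⁺⁺` pattern as a function on `ℕ`. -/
def slotF (k : ℕ) (hk : 0 < k) (π : Fin k → Bool) : ℕ → Bool :=
  fun s =>
    if h : 1 ≤ s ∧ s ≤ k then π ⟨s - 1, by omega⟩
    else if s = 0 then ! π ⟨0, hk⟩
    else ! π ⟨k - 1, by omega⟩

/-- A "pattern homomorphism" to the path with pattern `π`: abstract form of a multicut. -/
structure CutHom (G : Digraph V) (u v : V) (k : ℕ) (π : Fin k → Bool) (c : V → ℕ) : Prop where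
  le : ∀ z, c z ≤ k
  hu : c u = 0
  hv : c v = k
  gap1 : ∀ p q, G.Adj p q → c q ≤ c p + 1
  gap2 : ∀ p q, G.Adj p q → c p ≤ c q + 1
  up : ∀ p q, G.Adj p q → c q = c p + 1 → ∀ (h : c p < k), π ⟨c p, h⟩ = true
  dn : ∀ p q, G.Adj p q → c p = c q + 1 → ∀ (h : c q < k), π ⟨c q, h⟩ = false

section Slot

variable {k : ℕ} (hk : 0 < k) (π : Fin k → Bool)

lemma slotF_succ {t : ℕ} (h : t < k) : slotF k hk π (t+1) = π ⟨t, h⟩ := by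
  unfold slotF
  rw [dif_pos ⟨by omega, by omega⟩]; congr 1

lemma slotF_zero : slotF k hk π 0 = ! π ⟨0, hk⟩ := by
  unfold slotF
  rw [dif_neg (by omega), if_pos rfl]

lemma slotF_top : slotF k hk π (k+1) = ! π ⟨k-1, by omega⟩ := by
  unfold slotF
  rw [dif_neg (by omega), if_neg (by omega)]

lemma pi_congr {s t : ℕ} (hs : s < k) (ht : t < k) (h : s = t) :
    π ⟨s, hs⟩ = π ⟨t, ht⟩ := by subst h; rfl

lemma slotF_range {s : ℕ} (h1 : 1 ≤ s) (h2 : s ≤ k) :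
    slotF k hk π s = π ⟨s - 1, by omega⟩ := by
  unfold slotF; rw [dif_pos ⟨h1, h2⟩]

lemma slotF_alt (halt : AltPat k π) {t : ℕ} (h : t ≤ k) :
    slotF k hk π (t+1) = ! slotF k hk π t := by
  rcases Nat.eq_or_lt_of_le h with rfl | hlt
  · rw [slotF_top hk π, slotF_range hk π hk (le_refl t)]
  · rcases Nat.eq_zero_or_pos t with rfl | ht
    · rw [slotF_range hk π (by omega) (by omega), slotF_zero hk π, Bool.not_not]

    · rw [slotF_range hk π (by omega) (by omega), slotF_range hk π (by omega) (by omega)]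
      have h2 : (t - 1) + 1 < k := by omega
      have := halt (t-1) h2
      rw [pi_congr π (show t + 1 - 1 < k by omega) h2 (by omega), this]


end Slot

/-- Pattern-walks towards `v` staying in classes `≥ I`, with slots in `[s, k+1]`. -/
inductive SufG (G : Digraph V) (c0 : V → ℕ) (Sl : ℕ → Bool) (I k : ℕ) (v : V) : ℕ → V → Prop
  | base (s : ℕ) : SufG G c0 Sl I k v s v
  | cons {s s' : ℕ} {z z' : V} (hss : s ≤ s') (hsk : s' ≤ k + 1) (hreg : I ≤ c0 z)
      (hstep : (Sl s' = true ∧ G.Adj z z') ∨ (Sl s' = false ∧ G.Adj z' z))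
      (htail : SufG G c0 Sl I k v s' z') : SufG G c0 Sl I k v s z

/-- Pattern-walks from `u` staying in classes `< I`, with slots in `[0, s]`. -/
inductive PreG (G : Digraph V) (c0 : V → ℕ) (Sl : ℕ → Bool) (I : ℕ) (u : V) : ℕ → V → Prop
  | base (s : ℕ) : PreG G c0 Sl I u s u
  | cons {s s' : ℕ} {z' z : V} (hss : s' ≤ s) (hsI : s' ≤ I) (hreg : c0 z + 1 ≤ I)
      (hstep : (Sl s' = true ∧ G.Adj z' z) ∨ (Sl s' = false ∧ G.Adj z z'))
      (hinit : PreG G c0 Sl I u s' z') : PreG G c0 Sl I u s z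

section Graph

variable {G : Digraph V} {u v : V} {k : ℕ} {π : Fin k → Bool} {c0 : V → ℕ}

lemma SufG.mono {Sl : ℕ → Bool} {I s s' : ℕ} {z : V} (h : SufG G c0 Sl I k v s' z)
    (hs : s ≤ s') : SufG G c0 Sl I k v s z := by
  cases h with
  | base => exact SufG.base s
  | cons hss hsk hreg hstep htail =>
      exact SufG.cons (le_trans hs hss) hsk hreg hstep htail

lemma PreG.mono {Sl : ℕ → Bool} {I s s' : ℕ} {z : V} (h : PreG G c0 Sl I u s z)
    (hs : s ≤ s') : PreG G c0 Sl I u s' z := by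
  cases h with
  | base => exact PreG.base s'
  | cons hss hsI hreg hstep hinit =>
      exact PreG.cons (le_trans hss hs) hsI hreg hstep hinit

end Graph


section Hom

variable {G : Digraph V} {u v : V} {k : ℕ} {π : Fin k → Bool}

lemma exists_cutHom {A : Fin (k+1) → Set V} (hA : IsMulticut G u v k A π) :
    ∃ c : V → ℕ, CutHom G u v k π c ∧ ∀ (z : V) (j : Fin (k+1)), z ∈ A j ↔ (j : ℕ) = c z := by
  obtain ⟨hdisj, huniv, hu, hv, hgap, hdir⟩ := hA
  have hex : ∀ z, ∃ j : Fin (k+1), z ∈ A j := by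
    intro z
    have hz : z ∈ ⋃ i, A i := by rw [huniv]; exact Set.mem_univ z
    exact Set.mem_iUnion.1 hz
  choose F hF using hex
  have memiff : ∀ (z : V) (j : Fin (k+1)), z ∈ A j ↔ (j : ℕ) = (F z : ℕ) := by
    intro z j
    constructor
    · intro hz
      by_contra hne
      have hne' : j ≠ F z := fun h => hne (by rw [h])
      exact Set.disjoint_left.1 (hdisj j (F z) hne') hz (hF z)
    · intro h
      have : j = F z := Fin.ext h
      rw [this]; exact hF z
  refine ⟨fun z => (F z : ℕ), ⟨?_, ?_, ?_, ?_, ?_, ?_, ?_⟩, memiff⟩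
  · intro z; exact Nat.lt_succ_iff.1 (F z).isLt
  · have := (memiff u 0).1 hu; simpa using this.symm
  · have := (memiff v (Fin.last k)).1 hv; simpa using this.symm
  · intro p q hadj
    by_contra hcon
    exact (hgap (F p) (F q) (by omega) p (hF p) q (hF q)).1 hadj
  · intro p q hadj
    by_contra hcon
    exact (hgap (F q) (F p) (by omega) q (hF q) p (hF p)).2 hadj
  · intro p q hadj hq h
    set i : Fin k := ⟨(F p : ℕ), h⟩ with hi
    have hp' : p ∈ A i.castSucc := (memiff p i.castSucc).2 (by simp [hi])
    have hq' : q ∈ A i.succ := (memiff q i.succ).2 (by simp [hi, Fin.val_succ]; omega)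
    cases hb : π i with
    | false => exact absurd hadj ((hdir i p hp' q hq').2 hb)
    | true => rfl
  · intro p q hadj hp h
    set i : Fin k := ⟨(F q : ℕ), h⟩ with hi
    have hq' : q ∈ A i.castSucc := (memiff q i.castSucc).2 (by simp [hi])
    have hp' : p ∈ A i.succ := (memiff p i.succ).2 (by simp [hi, Fin.val_succ]; omega)
    cases hb : π i with
    | true => exact absurd hadj ((hdir i q hq' p hp').1 hb)
    | false => rfl

lemma cutHom_contract [DecidableEq V] {x y : V}
    (hxy : x ≠ y) {c : V → ℕ} (hc : CutHom G u v k π c) (hcxy : c x = c y) :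
    ∃ A' : Fin (k+1) → Set {z : V // z ≠ y},
      IsMulticut (contractDigraph G x y) (contractVert x y hxy u)
        (contractVert x y hxy v) k A' π := by
  have hlift : ∀ a b : {z : V // z ≠ y}, (contractDigraph G x y).Adj a b →
      ∃ p q : V, G.Adj p q ∧ c p = c a.val ∧ c q = c b.val := by
    rintro a b ⟨hne, p, q, hp, hq, hadj⟩
    refine ⟨p, q, hadj, ?_, ?_⟩
    · rcases hp with rfl | ⟨hax, rfl⟩
      · rfl
      · rw [hax, ← hcxy]
    · rcases hq with rfl | ⟨hbx, rfl⟩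
      · rfl
      · rw [hbx, ← hcxy]
  have hcv : ∀ z : V, c z < k + 1 := fun z => Nat.lt_succ_of_le (hc.le z)
  refine ⟨fun j => {z | c z.val = (j : ℕ)}, ?_, ?_, ?_, ?_, ?_, ?_⟩
  · intro i j hij
    rw [Set.disjoint_left]
    intro z hz hz'
    exact hij (Fin.ext (by rw [← hz, ← hz']))
  · apply Set.eq_univ_iff_forall.2
    intro z
    exact Set.mem_iUnion.2 ⟨⟨c z.val, hcv z.val⟩, rfl⟩
  · show c (contractVert x y hxy u).val = ((0 : Fin (k+1)) : ℕ)
    unfold contractVert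
    split
    · next h => simp only [Fin.val_zero]; rw [hcxy, ← h]; exact hc.hu
    · simpa using hc.hu
  · show c (contractVert x y hxy v).val = ((Fin.last k : Fin (k+1)) : ℕ)
    unfold contractVert
    split
    · next h => simp only [Fin.val_last]; rw [hcxy, ← h]; exact hc.hv
    · simpa using hc.hv
  · intro i j hij a ha b hb
    constructor
    · intro hadj
      obtain ⟨p, q, hpq, hp, hq⟩ := hlift a b hadj
      have := hc.gap1 p q hpq
      rw [hp, hq] at this
      have ha' : c a.val = (i : ℕ) := ha
      have hb' : c b.val = (j : ℕ) := hb
      omega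
    · intro hadj
      obtain ⟨p, q, hpq, hp, hq⟩ := hlift b a hadj
      have := hc.gap2 p q hpq
      rw [hp, hq] at this
      have ha' : c a.val = (i : ℕ) := ha
      have hb' : c b.val = (j : ℕ) := hb
      omega
  · intro i a ha b hb
    have ha' : c a.val = (i : ℕ) := by
      have : c a.val = ((i.castSucc : Fin (k+1)) : ℕ) := ha
      simpa using this
    have hb' : c b.val = (i : ℕ) + 1 := by
      have : c b.val = ((i.succ : Fin (k+1)) : ℕ) := hb
      simpa [Fin.val_succ] using this
    constructor
    · intro hπ hadj
      obtain ⟨p, q, hpq, hp, hq⟩ := hlift b a hadj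
      have hcw : c p = c q + 1 := by omega
      have hlt : c q < k := by have := i.isLt; omega
      have := hc.dn p q hpq hcw hlt
      have hiq : (⟨c q, hlt⟩ : Fin k) = i := Fin.ext (by simp; omega)
      rw [hiq] at this
      rw [hπ] at this
      simp at this
    · intro hπ hadj
      obtain ⟨p, q, hpq, hp, hq⟩ := hlift a b hadj
      have hcw : c q = c p + 1 := by omega
      have hlt : c p < k := by have := i.isLt; omega
      have := hc.up p q hpq hcw hlt
      have hiq : (⟨c p, hlt⟩ : Fin k) = i := Fin.ext (by simp; omega)
      rw [hiq] at this
      rw [hπ] at this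
      simp at this

end Hom


section Construct

variable {G : Digraph V} {u v : V} {k : ℕ} {π : Fin k → Bool} {c0 : V → ℕ} {I : ℕ}

/-- Original hom facts in slot form. -/
lemma hom_up_slot (hk : 0 < k) (hc0 : CutHom G u v k π c0) {p q : V}
    (h : G.Adj p q) (hq : c0 q = c0 p + 1) : slotF k hk π (c0 q) = true := by
  have hlt : c0 p < k := by have := hc0.le q; omega
  rw [hq, slotF_succ hk π hlt]
  exact hc0.up p q h hq hlt

lemma hom_dn_slot (hk : 0 < k) (hc0 : CutHom G u v k π c0) {p q : V}
    (h : G.Adj p q) (hp : c0 p = c0 q + 1) : slotF k hk π (c0 p) = false := by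
  have hlt : c0 q < k := by have := hc0.le p; omega
  rw [hp, slotF_succ hk π hlt]
  exact hc0.dn p q h hp hlt

lemma suffix_alternative (hk : 0 < k) (halt : AltPat k π) (hc0 : CutHom G u v k π c0)
    (hI1 : 1 ≤ I) (hIk : I ≤ k) {w : V} (hw : I ≤ c0 w) :
    SufG G c0 (slotF k hk π) I k v I w ∨
    ∃ c : V → ℕ, CutHom G u v k π c ∧ c w = I - 1 ∧ ∀ z, c0 z + 1 ≤ I → c z = c0 z := by
  classical
  by_cases hSg0 : SufG G c0 (slotF k hk π) I k v I w
  · exact Or.inl hSg0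
  right
  set Sl := slotF k hk π with hSl
  set Sg : ℕ → V → Prop := SufG G c0 Sl I k v with hSgdef
  have hSg : ¬ Sg I w := hSg0
  have hUp : ∀ {p q : V}, G.Adj p q → c0 q = c0 p + 1 → Sl (c0 q) = true :=
    fun h hq => hom_up_slot hk hc0 h hq
  have hDn : ∀ {p q : V}, G.Adj p q → c0 p = c0 q + 1 → Sl (c0 p) = false :=
    fun h hp => hom_dn_slot hk hc0 h hp
  have slAlt : ∀ t, t ≤ k → Sl (t+1) = ! Sl t := fun t ht => slotF_alt hk π halt ht
  -- T-lemmas (prepending steps)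
  have T2 : ∀ {p q : V} (s : ℕ), G.Adj p q → s ≤ k + 1 → I ≤ c0 p → Sl s = true →
      Sg s q → Sg s p := by
    intro p q s hadj hs hreg hslot htail
    exact SufG.cons (le_refl s) hs hreg (Or.inl ⟨hslot, hadj⟩) htail
  have T2' : ∀ {p q : V} (s : ℕ), G.Adj p q → s ≤ k + 1 → I ≤ c0 q → Sl s = false →
      Sg s p → Sg s q := by
    intro p q s hadj hs hreg hslot htail
    exact SufG.cons (le_refl s) hs hreg (Or.inr ⟨hslot, hadj⟩) htail
  have T1 : ∀ {p q : V} (s : ℕ), G.Adj p q → 1 ≤ s → s ≤ k + 1 → I ≤ c0 p →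
      Sg s q → Sg (s-1) p := by
    intro p q s hadj h1 hs hreg htail
    by_cases hslot : Sl s = true
    · exact SufG.mono (T2 s hadj hs hreg hslot htail) (by omega)
    · have hsf : Sl s = false := by revert hslot; cases (Sl s) <;> simp
      have halt' : Sl ((s-1)+1) = ! Sl (s-1) := slotF_alt hk π halt (by omega)
      have hst : Sl (s-1) = true := by
        rw [show (s-1)+1 = s by omega] at halt'
        rw [halt'] at hsf
        revert hsf; cases (Sl (s-1)) <;> simp
      exact SufG.cons (le_refl (s-1)) (by omega) hreg (Or.inl ⟨hst, hadj⟩)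
        (SufG.mono htail (by omega))
  have T1' : ∀ {p q : V} (s : ℕ), G.Adj p q → 1 ≤ s → s ≤ k + 1 → I ≤ c0 q →
      Sg s p → Sg (s-1) q := by
    intro p q s hadj h1 hs hreg htail
    by_cases hslot : Sl s = false
    · exact SufG.mono (T2' s hadj hs hreg hslot htail) (by omega)
    · have hst : Sl s = true := by revert hslot; cases (Sl s) <;> simp
      have halt' : Sl ((s-1)+1) = ! Sl (s-1) := slotF_alt hk π halt (by omega)
      have hsf : Sl (s-1) = false := by
        rw [show (s-1)+1 = s by omega] at halt'
        rw [halt'] at hst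
        revert hst; cases (Sl (s-1)) <;> simp
      exact SufG.cons (le_refl (s-1)) (by omega) hreg (Or.inr ⟨hsf, hadj⟩)
        (SufG.mono htail (by omega))
  -- rank function
  set R : V → ℕ := fun z =>
    if Nat.findGreatest (fun s => I ≤ s ∧ Sg s z) (k+1) = 0 then I - 1
    else Nat.findGreatest (fun s => I ≤ s ∧ Sg s z) (k+1) - 1 with hRdef
  have hGspec : ∀ z, Nat.findGreatest (fun s => I ≤ s ∧ Sg s z) (k+1) ≠ 0 →
      I ≤ Nat.findGreatest (fun s => I ≤ s ∧ Sg s z) (k+1) ∧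
      Sg (Nat.findGreatest (fun s => I ≤ s ∧ Sg s z) (k+1)) z := by
    intro z hg0
    have hex : ¬ (∀ n, 0 < n → n ≤ k+1 → ¬ (I ≤ n ∧ Sg n z)) := by
      intro hcon
      exact hg0 (Nat.findGreatest_eq_zero_iff.2 (fun {n} h1 h2 => hcon n h1 h2))
    push_neg at hex
    obtain ⟨n, hn1, hn2, hn3, hn4⟩ := hex
    exact Nat.findGreatest_spec (P := fun s => I ≤ s ∧ Sg s z) hn2 ⟨hn3, hn4⟩
  have hRlb : ∀ z, I - 1 ≤ R z := by
    intro z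
    simp only [hRdef]
    split
    · omega
    · next h => have := (hGspec z h).1; omega
  have hRk : ∀ z, R z ≤ k := by
    intro z
    have := Nat.findGreatest_le (P := fun s => I ≤ s ∧ Sg s z) (k+1)
    simp only [hRdef]
    split <;> omega
  have hRwit : ∀ z s, I ≤ s → s ≤ k + 1 → Sg s z → s ≤ R z + 1 := by
    intro z s h1 h2 h3
    have hle := Nat.le_findGreatest (P := fun s => I ≤ s ∧ Sg s z) h2 ⟨h1, h3⟩
    simp only [hRdef]
    split
    · next h => rw [h] at hle; omega
    · omega
  have hRmax : ∀ z s, s ≤ k + 1 → R z + 2 ≤ s → ¬ Sg s z := by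
    intro z s h1 h2 hcon
    have := hRwit z s (by have := hRlb z; omega) h1 hcon
    omega
  have hRwit' : ∀ z, I ≤ R z → Sg (R z + 1) z := by
    intro z hz
    have hg0 : Nat.findGreatest (fun s => I ≤ s ∧ Sg s z) (k+1) ≠ 0 := by
      intro h
      simp only [hRdef] at hz
      rw [if_pos h] at hz; omega
    have hsp := hGspec z hg0
    have hRg : R z + 1 = Nat.findGreatest (fun s => I ≤ s ∧ Sg s z) (k+1) := by
      simp only [hRdef]; rw [if_neg hg0]; omega
    rw [hRg]
    exact hsp.2
  -- the new hom
  set c : V → ℕ := fun z => if I ≤ c0 z then min (c0 z) (R z) else c0 z with hcdef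
  have hckeep : ∀ z, c0 z + 1 ≤ I → c z = c0 z := by
    intro z hz; simp only [hcdef]; rw [if_neg (by omega)]
  have hchigh : ∀ z, I ≤ c0 z → c z = min (c0 z) (R z) := by
    intro z hz; simp only [hcdef]; rw [if_pos hz]
  have hclb : ∀ z, I ≤ c0 z → I - 1 ≤ c z := by
    intro z hz; rw [hchigh z hz]; have := hRlb z; omega
  have hcle0 : ∀ z, c z ≤ c0 z := by
    intro z; simp only [hcdef]; split <;> omega
  have hW : ∀ z, I ≤ c0 z → I ≤ c z → Sg (c z + 1) z := by
    intro z h1 h2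
    have hcz := hchigh z h1
    exact SufG.mono (hRwit' z (by omega)) (by omega)
  have hMx : ∀ z, I ≤ c0 z → c z < c0 z → ∀ s, s ≤ k + 1 → c z + 2 ≤ s → ¬ Sg s z := by
    intro z h1 h2 s h3 h4
    have hcz := hchigh z h1
    exact hRmax z s h3 (by omega)
  have hcw : c w = I - 1 := by
    have hRw : R w = I - 1 := by
      rcases Nat.lt_or_ge (R w) I with h | h
      · have := hRlb w; omega
      · exact absurd (SufG.mono (hRwit' w h) (by omega)) hSg
    rw [hchigh w hw, hRw]
    omega
  -- main edge analysis
  have hedge : ∀ p q, G.Adj p q →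
      c q ≤ c p + 1 ∧ c p ≤ c q + 1 ∧
      (c q = c p + 1 → Sl (c q) = true) ∧ (c p = c q + 1 → Sl (c p) = false) := by
    intro p q hadj
    have hgap1 := hc0.gap1 p q hadj
    have hgap2 := hc0.gap2 p q hadj
    have hpk := hc0.le p
    have hqk := hc0.le q
    have hlep := hcle0 p
    have hleq := hcle0 q
    by_cases hp : I ≤ c0 p <;> by_cases hq : I ≤ c0 q
    · -- both high
      have hcp := hchigh p hp
      have hcq := hchigh q hq
      have hplb := hRlb p
      have hqlb := hRlb q
      have hRkp := hRk p
      have hRkq := hRk q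
      have G1 : c q ≤ c p + 1 := by
        by_contra hcon
        push_neg at hcon
        have hSq : Sg (c p + 3) q := SufG.mono (hW q hq (by omega)) (by omega)
        have hSp : Sg (c p + 2) p := T1 (c p + 3) hadj (by omega) (by omega) hp hSq
        exact hMx p hp (by omega) (c p + 2) (by omega) (by omega) hSp
      have G2 : c p ≤ c q + 1 := by
        by_contra hcon
        push_neg at hcon
        have hSp : Sg (c q + 3) p := SufG.mono (hW p hp (by omega)) (by omega)
        have hSq : Sg (c q + 2) q := T1' (c q + 3) hadj (by omega) (by omega) hq hSp
        exact hMx q hq (by omega) (c q + 2) (by omega) (by omega) hSq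
      refine ⟨G1, G2, ?_, ?_⟩
      · intro hq1
        by_contra hcon
        have hfalse : Sl (c q) = false := by revert hcon; cases (Sl (c q)) <;> simp
        by_cases hpa : c p = c0 p
        · by_cases hqa : c q = c0 q
          · have hT : Sl (c q) = true := by rw [hqa]; exact hUp hadj (by omega)
            rw [hT] at hfalse
            simp at hfalse
          · omega
        · have hSq : Sg (c q + 1) q := hW q hq (by omega)
          have hst : Sl (c q + 1) = true := by
            rw [slAlt (c q) (by omega), hfalse]
            rfl
          have hSp : Sg (c q + 1) p := T2 (c q + 1) hadj (by omega) hp hst hSq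
          exact hMx p hp (by omega) (c q + 1) (by omega) (by omega) hSp
      · intro hp1
        by_contra hcon
        have htrue : Sl (c p) = true := by revert hcon; cases (Sl (c p)) <;> simp
        by_cases hqa : c q = c0 q
        · by_cases hpa : c p = c0 p
          · have hF : Sl (c p) = false := by rw [hpa]; exact hDn hadj (by omega)
            rw [hF] at htrue
            simp at htrue
          · omega
        · have hSp : Sg (c p + 1) p := hW p hp (by omega)
          have hsf : Sl (c p + 1) = false := by
            rw [slAlt (c p) (by omega), htrue]
            rfl
          have hSq : Sg (c p + 1) q := T2' (c p + 1) hadj (by omega) hq hsf hSp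
          exact hMx q hq (by omega) (c p + 1) (by omega) (by omega) hSq
    · -- p high, q low
      have hpI : c0 p = I := by omega
      have hqI : c0 q = I - 1 := by omega
      have hcq : c q = c0 q := hckeep q (by omega)
      have hcp := hchigh p hp
      have hplb := hRlb p
      refine ⟨by omega, by omega, ?_, ?_⟩
      · intro hq1; omega
      · intro hp1
        have hcpI : c p = I := by omega
        have hF : Sl (c0 p) = false := hDn hadj (by omega)
        rw [hcpI, ← hpI]
        exact hF
    · -- p low, q high
      have hpI : c0 p = I - 1 := by omega
      have hqI : c0 q = I := by omega
      have hcp : c p = c0 p := hckeep p (by omega)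
      have hcq := hchigh q hq
      have hqlb := hRlb q
      refine ⟨by omega, by omega, ?_, ?_⟩
      · intro hq1
        have hcqI : c q = I := by omega
        have hT : Sl (c0 q) = true := hUp hadj (by omega)
        rw [hcqI, ← hqI]
        exact hT
      · intro hp1; omega
    · -- both low
      have hcp : c p = c0 p := hckeep p (by omega)
      have hcq : c q = c0 q := hckeep q (by omega)
      refine ⟨by omega, by omega, ?_, ?_⟩
      · intro hq1
        rw [hcq]
        exact hUp hadj (by omega)
      · intro hp1
        rw [hcp]
        exact hDn hadj (by omega)
  refine ⟨c, ⟨?_, ?_, ?_, fun p q h => (hedge p q h).1, fun p q h => (hedge p q h).2.1,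
    ?_, ?_⟩, hcw, hckeep⟩
  · intro z; have := hcle0 z; have := hc0.le z; omega
  · have h0 := hc0.hu
    rw [hckeep u (by omega), h0]
  · have h1 : I ≤ c0 v := by rw [hc0.hv]; omega
    have h2 : Sg (k+1) v := SufG.base (k+1)
    have h3 := hRwit v (k+1) (by omega) (le_refl _) h2
    have h4 := hc0.hv
    rw [hchigh v h1]
    have := hRk v; omega
  · intro p q h hq1 hlt
    have hSlq := (hedge p q h).2.2.1 hq1
    rw [← slotF_succ hk π hlt, ← hq1]
    exact hSlq
  · intro p q h hp1 hlt
    have hSlp := (hedge p q h).2.2.2 hp1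
    rw [← slotF_succ hk π hlt, ← hp1]
    exact hSlp

lemma prefix_alternative (hk : 0 < k) (halt : AltPat k π) (hc0 : CutHom G u v k π c0)
    (hI1 : 1 ≤ I) (hIk : I ≤ k) {w : V} (hw : c0 w + 1 ≤ I) :
    PreG G c0 (slotF k hk π) I u I w ∨
    ∃ c : V → ℕ, CutHom G u v k π c ∧ c w = I ∧ ∀ z, I ≤ c0 z → c z = c0 z := by
  classical
  by_cases hPg0 : PreG G c0 (slotF k hk π) I u I w
  · exact Or.inl hPg0
  right
  set Sl := slotF k hk π with hSl
  set Pg : ℕ → V → Prop := PreG G c0 Sl I u with hPgdef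
  have hPg : ¬ Pg I w := hPg0
  have hUp : ∀ {p q : V}, G.Adj p q → c0 q = c0 p + 1 → Sl (c0 q) = true :=
    fun h hq => hom_up_slot hk hc0 h hq
  have hDn : ∀ {p q : V}, G.Adj p q → c0 p = c0 q + 1 → Sl (c0 p) = false :=
    fun h hp => hom_dn_slot hk hc0 h hp
  have slAlt : ∀ t, t ≤ k → Sl (t+1) = ! Sl t := fun t ht => slotF_alt hk π halt ht
  -- T-lemmas (appending steps)
  have T2p : ∀ {p q : V} (s : ℕ), G.Adj p q → s ≤ I → c0 q + 1 ≤ I → Sl s = true →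
      Pg s p → Pg s q := by
    intro p q s hadj hs hreg hslot hinit
    exact PreG.cons (le_refl s) hs hreg (Or.inl ⟨hslot, hadj⟩) hinit
  have T2p' : ∀ {p q : V} (s : ℕ), G.Adj p q → s ≤ I → c0 p + 1 ≤ I → Sl s = false →
      Pg s q → Pg s p := by
    intro p q s hadj hs hreg hslot hinit
    exact PreG.cons (le_refl s) hs hreg (Or.inr ⟨hslot, hadj⟩) hinit
  have T1p : ∀ {p q : V} (s : ℕ), G.Adj p q → s + 1 ≤ I → c0 q + 1 ≤ I →
      Pg s p → Pg (s+1) q := by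
    intro p q s hadj hs hreg hinit
    by_cases hslot : Sl (s+1) = true
    · exact PreG.cons (le_refl (s+1)) (by omega) hreg (Or.inl ⟨hslot, hadj⟩)
        (PreG.mono hinit (by omega))
    · have hsf : Sl (s+1) = false := by revert hslot; cases (Sl (s+1)) <;> simp
      have hst : Sl s = true := by
        have := slAlt s (by omega)
        rw [hsf] at this
        revert this; cases (Sl s) <;> simp
      exact PreG.mono (T2p s hadj (by omega) hreg hst hinit) (by omega)
  have T1p' : ∀ {p q : V} (s : ℕ), G.Adj p q → s + 1 ≤ I → c0 p + 1 ≤ I →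
      Pg s q → Pg (s+1) p := by
    intro p q s hadj hs hreg hinit
    by_cases hslot : Sl (s+1) = false
    · exact PreG.cons (le_refl (s+1)) (by omega) hreg (Or.inr ⟨hslot, hadj⟩)
        (PreG.mono hinit (by omega))
    · have hst : Sl (s+1) = true := by revert hslot; cases (Sl (s+1)) <;> simp
      have hsf : Sl s = false := by
        have := slAlt s (by omega)
        rw [hst] at this
        revert this; cases (Sl s) <;> simp
      exact PreG.mono (T2p' s hadj (by omega) hreg hsf hinit) (by omega)
  -- the rank function
  set M : V → ℕ := fun z => I - Nat.findGreatest (fun d => Pg (I - d) z) I with hMdef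
  have hMle : ∀ z, M z ≤ I := by intro z; simp only [hMdef]; omega
  have hMwit : ∀ z s, s ≤ I → Pg s z → M z ≤ s := by
    intro z s hs h
    have h2 : Pg (I - (I - s)) z := by rw [show I - (I - s) = s by omega]; exact h
    have := Nat.le_findGreatest (P := fun d => Pg (I - d) z) (show I - s ≤ I by omega) h2
    simp only [hMdef]
    omega
  have hMmin : ∀ z s, s + 1 ≤ M z → ¬ Pg s z := by
    intro z s hs hcon
    have := hMwit z s (by have := hMle z; omega) hcon
    omega
  have hMspec : ∀ z, M z < I → Pg (M z) z := by
    intro z hz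
    have hg0 : Nat.findGreatest (fun d => Pg (I - d) z) I ≠ 0 := by
      intro h
      simp only [hMdef] at hz
      rw [h] at hz
      omega
    have hex : ¬ (∀ n, 0 < n → n ≤ I → ¬ Pg (I - n) z) := by
      intro hcon
      exact hg0 (Nat.findGreatest_eq_zero_iff.2 (fun {n} h1 h2 => hcon n h1 h2))
    push_neg at hex
    obtain ⟨n, hn1, hn2, hn3⟩ := hex
    have hspec := Nat.findGreatest_spec (P := fun d => Pg (I - d) z) hn2 hn3
    have : M z = I - Nat.findGreatest (fun d => Pg (I - d) z) I := by simp only [hMdef]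
    rw [this]
    exact hspec
  -- the new hom
  set c : V → ℕ := fun z => if I ≤ c0 z then c0 z else max (c0 z) (M z) with hcdef
  have hckeep : ∀ z, I ≤ c0 z → c z = c0 z := by
    intro z hz; simp only [hcdef]; rw [if_pos hz]
  have hclow : ∀ z, c0 z + 1 ≤ I → c z = max (c0 z) (M z) := by
    intro z hz; simp only [hcdef]; rw [if_neg (by omega)]
  have hcub : ∀ z, c0 z + 1 ≤ I → c z ≤ I := by
    intro z hz; rw [hclow z hz]; have := hMle z; omega
  have hcge0 : ∀ z, c0 z ≤ c z := by
    intro z; simp only [hcdef]; split <;> omega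
  have hWp : ∀ z, c0 z + 1 ≤ I → c z < I → Pg (c z) z := by
    intro z h1 h2
    have hcz := hclow z h1
    exact PreG.mono (hMspec z (by omega)) (by omega)
  have hMxp : ∀ z, c0 z + 1 ≤ I → c0 z < c z → ∀ s, s + 1 ≤ c z → ¬ Pg s z := by
    intro z h1 h2 s h3
    have hcz := hclow z h1
    exact hMmin z s (by omega)
  have hcw : c w = I := by
    have hMw : M w = I := by
      rcases Nat.lt_or_ge (M w) I with h | h
      · exact absurd (PreG.mono (hMspec w h) (by omega)) hPg
      · have := hMle w; omega
    rw [hclow w hw, hMw]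
    omega
  -- main edge analysis
  have hedge : ∀ p q, G.Adj p q →
      c q ≤ c p + 1 ∧ c p ≤ c q + 1 ∧
      (c q = c p + 1 → Sl (c q) = true) ∧ (c p = c q + 1 → Sl (c p) = false) := by
    intro p q hadj
    have hgap1 := hc0.gap1 p q hadj
    have hgap2 := hc0.gap2 p q hadj
    have hpk := hc0.le p
    have hqk := hc0.le q
    have hgep := hcge0 p
    have hgeq := hcge0 q
    by_cases hp : I ≤ c0 p <;> by_cases hq : I ≤ c0 q
    · -- both high : kept
      have hcp : c p = c0 p := hckeep p hp
      have hcq : c q = c0 q := hckeep q hq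
      refine ⟨by omega, by omega, ?_, ?_⟩
      · intro hq1
        rw [hcq]
        exact hUp hadj (by omega)
      · intro hp1
        rw [hcp]
        exact hDn hadj (by omega)
    · -- p high, q low
      have hpI : c0 p = I := by omega
      have hqI : c0 q = I - 1 := by omega
      have hcp : c p = c0 p := hckeep p hp
      have hcubq := hcub q (by omega)
      refine ⟨by omega, by omega, ?_, ?_⟩
      · intro hq1; omega
      · intro hp1
        have hF : Sl (c0 p) = false := hDn hadj (by omega)
        rw [hcp]
        exact hF
    · -- p low, q high
      have hpI : c0 p = I - 1 := by omega
      have hqI : c0 q = I := by omega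
      have hcq : c q = c0 q := hckeep q hq
      have hcubp := hcub p (by omega)
      refine ⟨by omega, by omega, ?_, ?_⟩
      · intro hq1
        have hT : Sl (c0 q) = true := hUp hadj (by omega)
        rw [hcq]
        exact hT
      · intro hp1; omega
    · -- both low
      have hlp : c0 p + 1 ≤ I := by omega
      have hlq : c0 q + 1 ≤ I := by omega
      have hcubp := hcub p hlp
      have hcubq := hcub q hlq
      have G1 : c q ≤ c p + 1 := by
        by_contra hcon
        push_neg at hcon
        have hPp : Pg (c p) p := hWp p hlp (by omega)
        have hPq : Pg (c p + 1) q := T1p (c p) hadj (by omega) hlq hPp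
        exact hMxp q hlq (by omega) (c p + 1) (by omega) hPq
      have G2 : c p ≤ c q + 1 := by
        by_contra hcon
        push_neg at hcon
        have hPq : Pg (c q) q := hWp q hlq (by omega)
        have hPp : Pg (c q + 1) p := T1p' (c q) hadj (by omega) hlp hPq
        exact hMxp p hlp (by omega) (c q + 1) (by omega) hPp
      refine ⟨G1, G2, ?_, ?_⟩
      · intro hq1
        by_contra hcon
        have hfalse : Sl (c q) = false := by revert hcon; cases (Sl (c q)) <;> simp
        by_cases hqa : c q = c0 q
        · have hT : Sl (c0 q) = true := hUp hadj (by omega)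
          rw [← hqa] at hT
          rw [hT] at hfalse
          simp at hfalse
        · have hPp : Pg (c p) p := hWp p hlp (by omega)
          have hsT : Sl (c p) = true := by
            have := slAlt (c p) (by omega)
            rw [← hq1, hfalse] at this
            revert this; cases (Sl (c p)) <;> simp
          have hPq : Pg (c p) q := T2p (c p) hadj (by omega) hlq hsT hPp
          exact hMxp q hlq (by omega) (c p) (by omega) hPq
      · intro hp1
        by_contra hcon
        have htrue : Sl (c p) = true := by revert hcon; cases (Sl (c p)) <;> simp
        by_cases hpa : c p = c0 p
        · have hF : Sl (c0 p) = false := hDn hadj (by omega)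
          rw [← hpa] at hF
          rw [hF] at htrue
          simp at htrue
        · have hPq : Pg (c q) q := hWp q hlq (by omega)
          have hsF : Sl (c q) = false := by
            have := slAlt (c q) (by omega)
            rw [← hp1, htrue] at this
            revert this; cases (Sl (c q)) <;> simp
          have hPp : Pg (c q) p := T2p' (c q) hadj (by omega) hlp hsF hPq
          exact hMxp p hlp (by omega) (c q) (by omega) hPp
  refine ⟨c, ⟨?_, ?_, ?_, fun p q h => (hedge p q h).1, fun p q h => (hedge p q h).2.1,
    ?_, ?_⟩, hcw, hckeep⟩
  · intro z
    by_cases hz : I ≤ c0 z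
    · rw [hckeep z hz]; exact hc0.le z
    · have := hcub z (by omega); omega
  · have h0 := hc0.hu
    have hM : M u ≤ 0 := hMwit u 0 (by omega) (PreG.base 0)
    rw [hclow u (by omega), h0]
    omega
  · have h1 : I ≤ c0 v := by rw [hc0.hv]; omega
    rw [hckeep v h1]
    exact hc0.hv
  · intro p q h hq1 hlt
    have hSlq := (hedge p q h).2.2.1 hq1
    rw [← slotF_succ hk π hlt, ← hq1]
    exact hSlq
  · intro p q h hp1 hlt
    have hSlp := (hedge p q h).2.2.2 hp1
    rw [← slotF_succ hk π hlt, ← hp1]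
    exact hSlp

end Construct

/-- A raw walk: `n` steps, vertices `g 0..g n`, directions `d`, slots `σ`. -/
structure RW (V : Type) where
  n : ℕ
  g : ℕ → V
  d : ℕ → Bool
  σ : ℕ → ℕ

/-- Walk invariants. -/
def RWOK {V : Type} (G : Digraph V) (c0 : V → ℕ) (Sl : ℕ → Bool) (a b : V)
    (lo hi slo shi : ℕ) (W : RW V) : Prop :=
  W.g 0 = a ∧ W.g W.n = b ∧
  (∀ t, t ≤ W.n → lo ≤ c0 (W.g t) ∧ c0 (W.g t) ≤ hi) ∧
  (∀ t, t + 1 < W.n → W.σ t ≤ W.σ (t+1)) ∧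
  (∀ t, t < W.n → slo ≤ W.σ t ∧ W.σ t ≤ shi) ∧
  (∀ t, t < W.n → W.d t = Sl (W.σ t)) ∧
  (∀ t, t < W.n → (W.d t = true → G.Adj (W.g t) (W.g (t+1))) ∧
      (W.d t = false → G.Adj (W.g (t+1)) (W.g t)))

section Walks

variable {G : Digraph V} {u v : V} {k : ℕ} {c0 : V → ℕ} {Sl : ℕ → Bool} {I : ℕ}

lemma rwok_mono_sigma {lo hi slo shi : ℕ} {aa bb : V} {W : RW V}
    (h : RWOK G c0 Sl aa bb lo hi slo shi W) {t t' : ℕ} (h1 : t ≤ t') (h2 : t' < W.n) :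
    W.σ t ≤ W.σ t' := by
  obtain ⟨-, -, -, h4, -, -, -⟩ := h
  induction t' with
  | zero =>
      have ht0 : t = 0 := by omega
      subst ht0
      exact le_rfl
  | succ m ih =>
      rcases Nat.eq_or_lt_of_le h1 with rfl | hlt
      · exact le_rfl
      · exact le_trans (ih (by omega) (by omega)) (h4 m (by omega))

lemma sufG_toWalk {z : V} {s : ℕ} (h : SufG G c0 Sl I k v s z)
    (hle : ∀ x, c0 x ≤ k) (hvI : I ≤ c0 v) :
    ∃ W : RW V, RWOK G c0 Sl z v I k s (k+1) W := by
  induction h with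
  | base s =>
      refine ⟨⟨0, fun _ => v, fun _ => true, fun _ => s⟩, rfl, rfl, ?_, ?_, ?_, ?_, ?_⟩
      · intro t ht
        exact ⟨hvI, hle v⟩
      all_goals (intro t ht; dsimp only at ht; omega)
  | @cons s s' z z' hss hsk hreg hstep htail ih =>
      obtain ⟨W, h1, h2, h3, h4, h5, h6, h7⟩ := ih
      refine ⟨⟨W.n + 1, fun t => if t = 0 then z else W.g (t-1),
        fun t => if t = 0 then Sl s' else W.d (t-1),
        fun t => if t = 0 then s' else W.σ (t-1)⟩, ?_, ?_, ?_, ?_, ?_, ?_, ?_⟩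
      · dsimp only
        rw [if_pos rfl]
      · dsimp only
        rw [if_neg (by omega)]
        simpa using h2
      · intro t ht
        dsimp only at ht ⊢
        split
        · exact ⟨hreg, hle z⟩
        · exact h3 (t-1) (by omega)
      · intro t ht
        dsimp only at ht ⊢
        rcases Nat.eq_zero_or_pos t with rfl | hpos
        · rw [if_pos rfl, if_neg (by omega)]
          simp only [Nat.add_sub_cancel]
          rcases Nat.eq_zero_or_pos W.n with hn0 | hn0
          · omega
          · exact (h5 0 (by omega)).1
        · rw [if_neg (by omega), if_neg (by omega)]
          have hmono := h4 (t-1) (by omega)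
          rw [show t + 1 - 1 = (t-1) + 1 by omega]
          exact hmono
      · intro t ht
        dsimp only at ht ⊢
        split
        · omega
        · have := h5 (t-1) (by omega)
          omega
      · intro t ht
        dsimp only at ht ⊢
        split
        · rfl
        · exact h6 (t-1) (by omega)
      · intro t ht
        dsimp only at ht ⊢
        rcases Nat.eq_zero_or_pos t with rfl | hpos
        · rw [if_pos rfl, if_pos rfl, if_neg (by omega)]
          simp only [Nat.add_sub_cancel, h1]
          constructor
          · intro hd
            rcases hstep with ⟨h', hadj⟩ | ⟨h', hadj⟩
            · exact hadj
            · rw [h'] at hd; simp at hd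
          · intro hd
            rcases hstep with ⟨h', hadj⟩ | ⟨h', hadj⟩
            · rw [h'] at hd; simp at hd
            · exact hadj
        · rw [if_neg (by omega), if_neg (by omega), if_neg (by omega)]
          rw [show t + 1 - 1 = (t-1) + 1 by omega]
          exact h7 (t-1) (by omega)

lemma preG_toWalk {z : V} {s : ℕ} (h : PreG G c0 Sl I u s z)
    (huI : c0 u + 1 ≤ I) :
    ∃ W : RW V, RWOK G c0 Sl u z 0 (I-1) 0 s W := by
  induction h with
  | base s =>
      refine ⟨⟨0, fun _ => u, fun _ => true, fun _ => 0⟩, rfl, rfl, ?_, ?_, ?_, ?_, ?_⟩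
      · intro t ht
        dsimp only
        exact ⟨by omega, by omega⟩
      all_goals (intro t ht; dsimp only at ht; omega)
  | @cons s s' z' z hss hsI hreg hstep hinit ih =>
      obtain ⟨W, h1, h2, h3, h4, h5, h6, h7⟩ := ih
      refine ⟨⟨W.n + 1, fun t => if t = W.n + 1 then z else W.g t,
        fun t => if t = W.n then Sl s' else W.d t,
        fun t => if t = W.n then s' else W.σ t⟩, ?_, ?_, ?_, ?_, ?_, ?_, ?_⟩
      · dsimp only
        rw [if_neg (by omega)]
        exact h1
      · dsimp only
        rw [if_pos rfl]
      · intro t ht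
        dsimp only at ht ⊢
        split
        · exact ⟨by omega, by omega⟩
        · exact h3 t (by omega)
      · intro t ht
        dsimp only at ht ⊢
        by_cases he : t + 1 = W.n
        · rw [if_neg (by omega), if_pos he]
          have hb := h5 t (by omega)
          omega
        · rw [if_neg (by omega), if_neg he]
          exact h4 t (by omega)
      · intro t ht
        dsimp only at ht ⊢
        split
        · omega
        · have := h5 t (by omega)
          omega
      · intro t ht
        dsimp only at ht ⊢
        split
        · rfl
        · next hne => exact h6 t (by omega)
      · intro t ht
        dsimp only at ht ⊢
        by_cases he : t = W.n
        · subst he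
          rw [if_pos rfl, if_neg (by omega), if_pos rfl, h2]
          constructor
          · intro hd
            rcases hstep with ⟨h', hadj⟩ | ⟨h', hadj⟩
            · exact hadj
            · rw [h'] at hd; simp at hd
          · intro hd
            rcases hstep with ⟨h', hadj⟩ | ⟨h', hadj⟩
            · rw [h'] at hd; simp at hd
            · exact hadj
        · rw [if_neg he, if_neg (by omega), if_neg (by omega)]
          exact h7 t (by omega)

lemma rwok_deloop {a b : V} {lo hi slo shi : ℕ} :
    ∀ (n : ℕ) (W : RW V), W.n = n → RWOK G c0 Sl a b lo hi slo shi W →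
    ∃ W' : RW V, RWOK G c0 Sl a b lo hi slo shi W' ∧
      (∀ t1 t2, t1 ≤ W'.n → t2 ≤ W'.n → W'.g t1 = W'.g t2 → t1 = t2) := by
  intro n
  induction n using Nat.strong_induction_on with
  | _ n ih =>
    intro W hWn hOK
    by_cases hinj : ∀ t1 t2, t1 ≤ W.n → t2 ≤ W.n → W.g t1 = W.g t2 → t1 = t2
    · exact ⟨W, hOK, hinj⟩
    push_neg at hinj
    obtain ⟨s1, s2, hs1, hs2, hgeq, hsne⟩ := hinj
    obtain ⟨t1, t2, ht1, ht2, hlt, heq⟩ :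
        ∃ t1 t2, t1 ≤ W.n ∧ t2 ≤ W.n ∧ t1 < t2 ∧ W.g t1 = W.g t2 := by
      rcases Nat.lt_or_ge s1 s2 with h | h
      · exact ⟨s1, s2, hs1, hs2, h, hgeq⟩
      · exact ⟨s2, s1, hs2, hs1, by omega, hgeq.symm⟩
    obtain ⟨h1, h2, h3, h4, h5, h6, h7⟩ := hOK
    set Δ := t2 - t1 with hΔ
    set W' : RW V := ⟨W.n - Δ, fun t => if t ≤ t1 then W.g t else W.g (t + Δ),
      fun t => if t < t1 then W.d t else W.d (t + Δ),
      fun t => if t < t1 then W.σ t else W.σ (t + Δ)⟩ with hW'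
    have hn' : W'.n = W.n - Δ := rfl
    have hg' : ∀ t, t1 ≤ t → W'.g t = W.g (t + Δ) := by
      intro t ht
      show (if t ≤ t1 then W.g t else W.g (t + Δ)) = W.g (t + Δ)
      split
      · next hle =>
        have het : t = t1 := by omega
        subst het
        rw [heq]
        congr 1
        omega
      · rfl
    have hg'' : ∀ t, t ≤ t1 → W'.g t = W.g t := by
      intro t ht
      show (if t ≤ t1 then W.g t else W.g (t + Δ)) = W.g t
      rw [if_pos ht]
    have hd' : ∀ t, t1 ≤ t → W'.d t = W.d (t + Δ) ∧ W'.σ t = W.σ (t + Δ) := by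
      intro t ht
      constructor
      · show (if t < t1 then W.d t else W.d (t + Δ)) = W.d (t + Δ)
        rw [if_neg (by omega)]
      · show (if t < t1 then W.σ t else W.σ (t + Δ)) = W.σ (t + Δ)
        rw [if_neg (by omega)]
    have hd'' : ∀ t, t < t1 → W'.d t = W.d t ∧ W'.σ t = W.σ t := by
      intro t ht
      constructor
      · show (if t < t1 then W.d t else W.d (t + Δ)) = W.d t
        rw [if_pos ht]
      · show (if t < t1 then W.σ t else W.σ (t + Δ)) = W.σ t
        rw [if_pos ht]
    have hOK' : RWOK G c0 Sl a b lo hi slo shi W' := by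
      refine ⟨?_, ?_, ?_, ?_, ?_, ?_, ?_⟩
      · rw [hg'' 0 (by omega)]
        exact h1
      · rcases Nat.lt_or_ge W'.n t1 with hc | hc
        · omega
        · rw [hg' W'.n hc, hn', show W.n - Δ + Δ = W.n by omega]
          exact h2
      · intro t ht
        rw [hn'] at ht
        rcases Nat.lt_or_ge t1 t with hc | hc
        · rw [hg' t (by omega)]
          exact h3 (t + Δ) (by omega)
        · rw [hg'' t hc]
          exact h3 t (by omega)
      · intro t ht
        rw [hn'] at ht
        by_cases hc1 : t < t1 <;> by_cases hc2 : t + 1 < t1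
        · rw [(hd'' t hc1).2, (hd'' (t+1) hc2).2]
          exact h4 t (by omega)
        · rw [(hd'' t hc1).2, (hd' (t+1) (by omega)).2]
          exact rwok_mono_sigma ⟨h1, h2, h3, h4, h5, h6, h7⟩ (by omega) (by omega)
        · omega
        · rw [(hd' t (by omega)).2, (hd' (t+1) (by omega)).2]
          have := h4 (t + Δ) (by omega)
          rw [show t + 1 + Δ = t + Δ + 1 by omega]
          exact this
      · intro t ht
        rw [hn'] at ht
        by_cases hc : t < t1
        · rw [(hd'' t hc).2]
          exact h5 t (by omega)
        · rw [(hd' t (by omega)).2]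
          exact h5 (t + Δ) (by omega)
      · intro t ht
        rw [hn'] at ht
        by_cases hc : t < t1
        · rw [(hd'' t hc).1, (hd'' t hc).2]
          exact h6 t (by omega)
        · rw [(hd' t (by omega)).1, (hd' t (by omega)).2]
          exact h6 (t + Δ) (by omega)
      · intro t ht
        rw [hn'] at ht
        by_cases hc : t < t1
        · rw [hg'' t (by omega), hg'' (t+1) (by omega), (hd'' t hc).1]
          exact h7 t (by omega)
        · have e2 : W'.g (t+1) = W.g (t + Δ + 1) := by
            rw [hg' (t+1) (by omega), show t + 1 + Δ = t + Δ + 1 by omega]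
          rw [hg' t (by omega), e2, (hd' t (by omega)).1]
          exact h7 (t + Δ) (by omega)
    have hn'lt : W'.n < n := by
      rw [hn']
      omega
    exact ih W'.n hn'lt W' rfl hOK'

end Walks

lemma ppExt_eq_slotF {k : ℕ} (hk : 0 < k) (π : Fin k → Bool) (s : Fin (k+2)) :
    ppExt k hk π s = slotF k hk π s.val := rfl

lemma assemble {G : Digraph V} {u v : V} {k : ℕ} (hk : 0 < k)
    {π : Fin k → Bool} (halt : AltPat k π) {c0 : V → ℕ} (hc0 : CutHom G u v k π c0)
    {A : Fin (k+1) → Set V} (hmem : ∀ (z : V) (j : Fin (k+1)), z ∈ A j ↔ (j : ℕ) = c0 z)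
    {x y xl yh : V} {dirf : Bool} (hadj : G.Adj x y)
    (hor : (xl = x ∧ yh = y ∧ dirf = true) ∨ (xl = y ∧ yh = x ∧ dirf = false))
    (hstep : c0 yh = c0 xl + 1)
    (hdirf : slotF k hk π (c0 yh) = dirf)
    (hSuf : SufG G c0 (slotF k hk π) (c0 yh) k v (c0 yh) yh)
    (hPre : PreG G c0 (slotF k hk π) (c0 yh) u (c0 yh) xl) :
    ∃ i : Fin k,
      ((x ∈ A i.castSucc ∧ y ∈ A i.succ) ∨ (y ∈ A i.castSucc ∧ x ∈ A i.succ)) ∧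
      ∃ (P : DiPath G u v) (q : Fin (k+3) → Fin (P.n+1)),
        IsConcat P (k+2) q (ppExt k hk π) ∧
        ∃ j : Fin P.n,
          ((P.p j.castSucc = x ∧ P.p j.succ = y) ∨
           (P.p j.castSucc = y ∧ P.p j.succ = x)) ∧
          ∀ j' : Fin P.n,
            ((P.p j'.castSucc ∈ A i.castSucc ∧ P.p j'.succ ∈ A i.succ) ∨
             (P.p j'.castSucc ∈ A i.succ ∧ P.p j'.succ ∈ A i.castSucc)) →
            j' = j := by
  classical
  set Sl := slotF k hk π with hSldef
  set I := c0 yh with hIdef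
  have hI1 : 1 ≤ I := by omega
  have hIk : I ≤ k := hc0.le yh
  have hvk : c0 v = k := hc0.hv
  have hu0 : c0 u = 0 := hc0.hu
  -- walks
  obtain ⟨W2, hW2⟩ := sufG_toWalk hSuf hc0.le (by omega)
  obtain ⟨W2', hOK2, hinj2⟩ := rwok_deloop W2.n W2 rfl hW2
  obtain ⟨W1, hW1⟩ := preG_toWalk hPre (by omega)
  obtain ⟨W1', hOK1, hinj1⟩ := rwok_deloop W1.n W1 rfl hW1
  obtain ⟨a1, b1, reg1, mono1, slot1, dirm1, adj1⟩ := hOK1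
  obtain ⟨a2, b2, reg2, mono2, slot2, dirm2, adj2⟩ := hOK2
  set n1 := W1'.n with hn1
  set n2 := W2'.n with hn2
  set N := n1 + 1 + n2 with hN
  set pg : ℕ → V := fun t => if t ≤ n1 then W1'.g t else W2'.g (t - (n1+1)) with hpgdef
  set pd : ℕ → Bool := fun t => if t < n1 then W1'.d t
    else if t = n1 then dirf else W2'.d (t - (n1+1)) with hpddef
  set pσ : ℕ → ℕ := fun t => if t < n1 then W1'.σ t
    else if t = n1 then I else W2'.σ (t - (n1+1)) with hpσdef
  have hpg_low : ∀ t, t ≤ n1 → pg t = W1'.g t := by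
    intro t ht; simp only [hpgdef]; rw [if_pos ht]
  have hpg_high : ∀ t, n1 < t → pg t = W2'.g (t - (n1+1)) := by
    intro t ht; simp only [hpgdef]; rw [if_neg (by omega)]
  have hreg_low : ∀ t, t ≤ n1 → c0 (pg t) + 1 ≤ I := by
    intro t ht
    rw [hpg_low t ht]
    have := (reg1 t ht).2
    omega
  have hreg_high : ∀ t, n1 < t → t ≤ N → I ≤ c0 (pg t) := by
    intro t ht htN
    rw [hpg_high t ht]
    exact (reg2 (t - (n1+1)) (by omega)).1
  have hpgu : pg 0 = u := by rw [hpg_low 0 (by omega)]; exact a1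
  have hpgv : pg N = v := by
    rw [hpg_high N (by omega)]
    rw [show N - (n1+1) = n2 by omega]
    exact b2
  have hpgxl : pg n1 = xl := by rw [hpg_low n1 le_rfl]; exact b1
  have hpgyh : pg (n1+1) = yh := by
    rw [hpg_high (n1+1) (by omega)]
    simpa using a2
  have hpdS : ∀ t, t < N → pd t = Sl (pσ t) := by
    intro t ht
    simp only [hpddef, hpσdef]
    by_cases h1 : t < n1
    · rw [if_pos h1, if_pos h1]
      exact dirm1 t (by omega)
    · by_cases h2 : t = n1
      · rw [if_neg h1, if_neg h1, if_pos h2, if_pos h2]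
        exact hdirf.symm
      · rw [if_neg h1, if_neg h1, if_neg h2, if_neg h2]
        exact dirm2 (t - (n1+1)) (by omega)
  have hσ_low : ∀ t, t ≤ n1 → pσ t ≤ I := by
    intro t ht
    simp only [hpσdef]
    by_cases h1 : t < n1
    · rw [if_pos h1]
      exact (slot1 t h1).2
    · rw [if_neg h1, if_pos (by omega)]
  have hσ_high : ∀ t, n1 ≤ t → t < N → I ≤ pσ t := by
    intro t ht htN
    simp only [hpσdef]
    by_cases h2 : t = n1
    · rw [if_neg (by omega), if_pos h2]
    · rw [if_neg (by omega), if_neg h2]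
      exact (slot2 (t - (n1+1)) (by omega)).1
  have hσ_ub : ∀ t, t < N → pσ t ≤ k + 1 := by
    intro t ht
    by_cases h1 : t ≤ n1
    · have := hσ_low t h1; omega
    · simp only [hpσdef]
      rw [if_neg (by omega), if_neg (by omega)]
      exact (slot2 (t - (n1+1)) (by omega)).2
  have hσmono : ∀ t t', t ≤ t' → t' < N → pσ t ≤ pσ t' := by
    intro t t' htt ht'
    by_cases h1 : t' < n1
    · have e1 : pσ t = W1'.σ t := by simp only [hpσdef]; rw [if_pos (by omega)]
      have e2 : pσ t' = W1'.σ t' := by simp only [hpσdef]; rw [if_pos h1]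
      rw [e1, e2]
      exact rwok_mono_sigma ⟨a1, b1, reg1, mono1, slot1, dirm1, adj1⟩ htt h1
    · by_cases h2 : t ≤ n1
      · exact le_trans (hσ_low t h2) (hσ_high t' (by omega) ht')
      · have e1 : pσ t = W2'.σ (t - (n1+1)) := by
          simp only [hpσdef]; rw [if_neg (by omega), if_neg (by omega)]
        have e2 : pσ t' = W2'.σ (t' - (n1+1)) := by
          simp only [hpσdef]; rw [if_neg (by omega), if_neg (by omega)]
        rw [e1, e2]
        exact rwok_mono_sigma ⟨a2, b2, reg2, mono2, slot2, dirm2, adj2⟩ (by omega) (by omega)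
  have hadjP : ∀ t, t < N → (pd t = true → G.Adj (pg t) (pg (t+1))) ∧
      (pd t = false → G.Adj (pg (t+1)) (pg t)) := by
    intro t ht
    by_cases h1 : t < n1
    · have e0 : pd t = W1'.d t := by simp only [hpddef]; rw [if_pos h1]
      have e1 := hpg_low t (by omega)
      have e2 := hpg_low (t+1) (by omega)
      rw [e0, e1, e2]
      exact adj1 t h1
    · by_cases h2 : t = n1
      · have e0 : pd t = dirf := by simp only [hpddef]; rw [if_neg h1, if_pos h2]
        have e1 : pg t = xl := by rw [h2]; exact hpgxl
        have e2 : pg (t+1) = yh := by rw [h2]; exact hpgyh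
        rw [e0, e1, e2]
        rcases hor with ⟨hx1, hy1, hd1⟩ | ⟨hx1, hy1, hd1⟩
        · subst hx1; subst hy1; subst hd1
          exact ⟨fun _ => hadj, fun hcon => by simp at hcon⟩
        · subst hx1; subst hy1; subst hd1
          exact ⟨fun hcon => by simp at hcon, fun _ => hadj⟩
      · have e0 : pd t = W2'.d (t - (n1+1)) := by
          simp only [hpddef]; rw [if_neg h1, if_neg h2]
        have e1 := hpg_high t (by omega)
        have e2 := hpg_high (t+1) (by omega)
        have e3 : t + 1 - (n1+1) = (t - (n1+1)) + 1 := by omega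
        rw [e0, e1, e2, e3]
        exact adj2 (t - (n1+1)) (by omega)
  have hpinj : ∀ t t', t ≤ N → t' ≤ N → pg t = pg t' → t = t' := by
    intro t t' ht ht' heq
    by_cases h1 : t ≤ n1 <;> by_cases h2 : t' ≤ n1
    · rw [hpg_low t h1, hpg_low t' h2] at heq
      exact hinj1 t t' h1 h2 heq
    · have r1 := hreg_low t h1
      have r2 := hreg_high t' (by omega) ht'
      rw [heq] at r1
      omega
    · have r1 := hreg_high t (by omega) ht
      have r2 := hreg_low t' h2
      rw [← heq] at r2
      omega
    · rw [hpg_high t (by omega), hpg_high t' (by omega)] at heq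
      have := hinj2 (t - (n1+1)) (t' - (n1+1)) (by omega) (by omega) heq
      omega
  -- the path
  set P : DiPath G u v :=
    { n := N
      p := fun t => pg t.val
      inj := by
        intro a b hab
        exact Fin.ext (hpinj a.val b.val (by omega) (by omega) hab)
      first := hpgu
      last := by
        show pg (Fin.last N).val = v
        rw [Fin.val_last]
        exact hpgv
      dir := fun t => pd t.val
      adj := by
        intro t
        have := hadjP t.val t.isLt
        simpa [Fin.coe_castSucc, Fin.val_succ] using this } with hPdef
  have hPn : P.n = N := rfl
  -- the concatenation
  have hPex : ∀ s : ℕ, ∃ t, t = N ∨ (t < N ∧ s ≤ pσ t) := fun s => ⟨N, Or.inl rfl⟩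
  set Q : ℕ → ℕ := fun s => Nat.find (hPex s) with hQdef
  have hQle : ∀ s, Q s ≤ N := fun s => Nat.find_le (Or.inl rfl)
  have hQspec : ∀ s, Q s = N ∨ (Q s < N ∧ s ≤ pσ (Q s)) := fun s => Nat.find_spec (hPex s)
  have hQmin : ∀ s t, t < Q s → ¬(t = N ∨ (t < N ∧ s ≤ pσ t)) := fun s t ht =>
    Nat.find_min (hPex s) ht
  have hQmono : ∀ s s', s ≤ s' → Q s ≤ Q s' := by
    intro s s' hss
    apply Nat.find_min'
    rcases hQspec s' with h | ⟨h1, h2⟩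
    · exact Or.inl h
    · exact Or.inr ⟨h1, le_trans hss h2⟩
  have hQ0 : Q 0 = 0 := by
    have h00 : (0 : ℕ) = N ∨ (0 < N ∧ 0 ≤ pσ 0) := by
      right
      exact ⟨by omega, by omega⟩
    have hle0 : Q 0 ≤ 0 := Nat.find_min' (hPex 0) h00
    omega
  have hQtop : Q (k+2) = N := by
    rcases hQspec (k+2) with h | ⟨h1, h2⟩
    · exact h
    · have := hσ_ub (Q (k+2)) h1
      omega
  have hQseg : ∀ (s : ℕ) (t : ℕ), s < k + 2 → Q s ≤ t → t < Q (s+1) → pσ t = s := by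
    intro s t hs h1 h2
    have htN : t < N := by have := hQle (s+1); omega
    have hub : ¬(t = N ∨ (t < N ∧ s + 1 ≤ pσ t)) := hQmin (s+1) t h2
    push_neg at hub
    have hub2 := hub.2 htN
    have hlb : s ≤ pσ t := by
      rcases hQspec s with h | ⟨hh1, hh2⟩
      · omega
      · exact le_trans hh2 (hσmono (Q s) t h1 htN)
    omega
  refine ⟨⟨I - 1, by omega⟩, ?_, P, fun s => ⟨Q s.val, by have := hQle s.val; omega⟩,
    ⟨?_, ?_, ?_, ?_⟩, ⟨n1, by omega⟩, ?_, ?_⟩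
  · -- x, y in the right classes
    have hcxl : ((⟨I-1, by omega⟩ : Fin k).castSucc : ℕ) = c0 xl := by
      simp [Fin.coe_castSucc]
      omega
    have hcyh : ((⟨I-1, by omega⟩ : Fin k).succ : ℕ) = c0 yh := by
      simp [Fin.val_succ]
      omega
    rcases hor with ⟨hx1, hy1, -⟩ | ⟨hx1, hy1, -⟩
    · left
      constructor
      · rw [hmem]; rw [hcxl, hx1]
      · rw [hmem]; rw [hcyh, hy1]
    · right
      constructor
      · rw [hmem]; rw [hcxl, hx1]
      · rw [hmem]; rw [hcyh, hy1]
  · -- Monotone q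
    intro s s' hss
    show (⟨Q s.val, _⟩ : Fin (N+1)) ≤ ⟨Q s'.val, _⟩
    simp only [Fin.mk_le_mk]
    exact hQmono s.val s'.val hss
  · -- q 0 = 0
    apply Fin.ext
    simpa using hQ0
  · -- q last
    apply Fin.ext
    simp only [Fin.val_last]
    exact hQtop
  · -- segments
    intro s t h1 h2
    have hsv : (s.castSucc : ℕ) = s.val := Fin.coe_castSucc s
    have hsv' : (s.succ : ℕ) = s.val + 1 := Fin.val_succ s
    simp only [hsv, hsv'] at h1 h2
    have hseg := hQseg s.val t.val s.isLt h1 h2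
    show pd t.val = ppExt k hk π s
    rw [hpdS t.val t.isLt, hseg, ppExt_eq_slotF]
  · -- the edge f on the path
    have e1 : P.p (Fin.castSucc ⟨n1, by omega⟩) = xl := by
      show pg n1 = xl
      exact hpgxl
    have e2 : P.p (Fin.succ ⟨n1, by omega⟩) = yh := by
      show pg (n1 + 1) = yh
      exact hpgyh
    rcases hor with ⟨hx1, hy1, -⟩ | ⟨hx1, hy1, -⟩
    · left; exact ⟨by rw [e1, hx1], by rw [e2, hy1]⟩
    · right; exact ⟨by rw [e1, hx1], by rw [e2, hy1]⟩
  · -- uniqueness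
    intro j' hj'
    apply Fin.ext
    show j'.val = n1
    have hcs : (Fin.castSucc j' : ℕ) = j'.val := Fin.coe_castSucc j'
    have hsc : (Fin.succ j' : ℕ) = j'.val + 1 := Fin.val_succ j'
    have hkey : ∀ t, t ≤ N → ((pg t ∈ A (Fin.castSucc ⟨I-1, by omega⟩)) → c0 (pg t) = I - 1) ∧
        ((pg t ∈ A (Fin.succ ⟨I-1, by omega⟩)) → c0 (pg t) = I) := by
      intro t ht
      constructor
      · intro hmem'
        have := (hmem (pg t) _).1 hmem'
        simp [Fin.coe_castSucc] at this
        omega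
      · intro hmem'
        have := (hmem (pg t) _).1 hmem'
        simp [Fin.val_succ] at this
        omega
    have hjN : j'.val < N := j'.isLt
    rcases hj' with ⟨hm1, hm2⟩ | ⟨hm1, hm2⟩
    · have c1 : c0 (pg j'.val) = I - 1 := (hkey j'.val (by omega)).1 hm1
      have c2 : c0 (pg (j'.val + 1)) = I := (hkey (j'.val+1) (by omega)).2 hm2
      by_cases h1 : j'.val ≤ n1
      · by_cases h2 : j'.val + 1 ≤ n1
        · have := hreg_low (j'.val+1) h2
          omega
        · omega
      · have := hreg_high j'.val (by omega) (by omega)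
        omega
    · have c1 : c0 (pg j'.val) = I := (hkey j'.val (by omega)).2 hm1
      have c2 : c0 (pg (j'.val + 1)) = I - 1 := (hkey (j'.val+1) (by omega)).1 hm2
      by_cases h1 : j'.val ≤ n1
      · have := hreg_low j'.val h1
        omega
      · have := hreg_high (j'.val + 1) (by omega) (by omega)
        omega

end CEIC


/-- Theorem 4.5 (`minimalcuts`): if `(A 0, …, A k)` is a `(u,v)`-multicut with
alternating pattern `π`, and `f` is an edge of `G` (from `x` to `y`) such that `G/f`
admits no `(u,v)`-multicut with pattern `π`, then `f` lies between `A (i-1)` and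
`A i` for some `i`; moreover there is a path `P` between `u` and `v` admitting a
`π⁺⁺`-concatenation such that `f` is the only edge of `P` between `A (i-1)` and `A i`. -/
theorem contracted_edge_in_cut {V : Type} [DecidableEq V] (G : Digraph V)
    (hG : WeaklyConnected G) (u v : V) (huv : u ≠ v)
    (k : ℕ) (hk : 0 < k) (π : Fin k → Bool) (halt : AltPat k π)
    (A : Fin (k+1) → Set V) (hA : IsMulticut G u v k A π)
    (x y : V) (hxy : x ≠ y) (hf : G.Adj x y)
    (hno : ¬ ∃ A' : Fin (k+1) → Set {z : V // z ≠ y},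
      IsMulticut (contractDigraph G x y)
        (contractVert x y hxy u) (contractVert x y hxy v) k A' π) :
    ∃ i : Fin k,
      ((x ∈ A i.castSucc ∧ y ∈ A i.succ) ∨ (y ∈ A i.castSucc ∧ x ∈ A i.succ)) ∧
      ∃ (P : DiPath G u v) (q : Fin (k+3) → Fin (P.n+1)),
        IsConcat P (k+2) q (ppExt k hk π) ∧
        ∃ j : Fin P.n,
          ((P.p j.castSucc = x ∧ P.p j.succ = y) ∨
           (P.p j.castSucc = y ∧ P.p j.succ = x)) ∧
          ∀ j' : Fin P.n,
            ((P.p j'.castSucc ∈ A i.castSucc ∧ P.p j'.succ ∈ A i.succ) ∨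
             (P.p j'.castSucc ∈ A i.succ ∧ P.p j'.succ ∈ A i.castSucc)) →
            j' = j := by
  classical
  obtain ⟨c0, hc0, hmem⟩ := CEIC.exists_cutHom hA
  have hnoc : ∀ c : V → ℕ, CEIC.CutHom G u v k π c → c x ≠ c y := by
    intro c hc hcxy
    exact hno (CEIC.cutHom_contract hxy hc hcxy)
  have hgap1 := hc0.gap1 x y hf
  have hgap2 := hc0.gap2 x y hf
  have hne := hnoc c0 hc0
  rcases Nat.lt_or_ge (c0 x) (c0 y) with hcase | hcase
  · -- x below y
    have hstep : c0 y = c0 x + 1 := by omega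
    have hdirf : CEIC.slotF k hk π (c0 y) = true := CEIC.hom_up_slot hk hc0 hf hstep
    have hI1 : 1 ≤ c0 y := by omega
    have hIk : c0 y ≤ k := hc0.le y
    have hSuf : CEIC.SufG G c0 (CEIC.slotF k hk π) (c0 y) k v (c0 y) y := by
      rcases CEIC.suffix_alternative hk halt hc0 hI1 hIk (le_refl (c0 y)) with
        h | ⟨c, hc, hcw, hkeep⟩
      · exact h
      · exfalso
        apply hnoc c hc
        have e2 : c x = c0 x := hkeep x (by omega)
        omega
    have hPre : CEIC.PreG G c0 (CEIC.slotF k hk π) (c0 y) u (c0 y) x := by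
      rcases CEIC.prefix_alternative hk halt hc0 hI1 hIk
          (show c0 x + 1 ≤ c0 y by omega) with h | ⟨c, hc, hcw, hkeep⟩
      · exact h
      · exfalso
        apply hnoc c hc
        have e2 : c y = c0 y := hkeep y (le_refl _)
        omega
    exact CEIC.assemble hk halt hc0 hmem hf (Or.inl ⟨rfl, rfl, rfl⟩) hstep hdirf hSuf hPre
  · -- y below x
    have hstep : c0 x = c0 y + 1 := by omega
    have hdirf : CEIC.slotF k hk π (c0 x) = false := CEIC.hom_dn_slot hk hc0 hf hstep
    have hI1 : 1 ≤ c0 x := by omega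
    have hIk : c0 x ≤ k := hc0.le x
    have hSuf : CEIC.SufG G c0 (CEIC.slotF k hk π) (c0 x) k v (c0 x) x := by
      rcases CEIC.suffix_alternative hk halt hc0 hI1 hIk (le_refl (c0 x)) with
        h | ⟨c, hc, hcw, hkeep⟩
      · exact h
      · exfalso
        apply hnoc c hc
        have e2 : c y = c0 y := hkeep y (by omega)
        omega
    have hPre : CEIC.PreG G c0 (CEIC.slotF k hk π) (c0 x) u (c0 x) y := by
      rcases CEIC.prefix_alternative hk halt hc0 hI1 hIk
          (show c0 y + 1 ≤ c0 x by omega) with h | ⟨c, hc, hcw, hkeep⟩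
      · exact h
      · exfalso
        apply hnoc c hc
        have e2 : c x = c0 x := hkeep x (le_refl _)
        omega
    exact CEIC.assemble hk halt hc0 hmem hf (Or.inr ⟨rfl, rfl, rfl⟩) hstep hdirf hSuf hPre
end

section
/- Let G be a digraph and let P be a path of G between u and v. For an alternating pattern π = (π₁,…,πₖ), if (A₀,…,Aₖ) is a (u,v)-multicut of P with pattern π and eᵢ denotes the first edge of P (in order from u) between Aᵢ₋₁ and Aᵢ, then eᵢ is a forward edge of P (directed away from u along P) if and only if πᵢ = +1. -/
/-- Claim (1) in the proof of Theorem 4.4: if `(A 0, …, A k)` is a `(u,v)`-multicut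
of a path `P` with alternating pattern `π`, then the first edge of `P` between
`A (i-1)` and `A i` is a forward edge of `P` (i.e. directed away from `u` along `P`)
if and only if `π i = +1`. -/
theorem first_cut_edge_forward_iff {V : Type} (G : Digraph V) (u v : V)
    (huv : u ≠ v) (P : DiPath G u v)
    (k : ℕ) (hk : 0 < k) (π : Fin k → Bool) (halt : AltPat k π)
    (A : Fin (k+1) → Set (Fin (P.n+1)))
    (hA : IsMulticut P.digraph 0 (Fin.last P.n) k A π) :
    ∀ i : Fin k, ∀ j : Fin P.n,
      ((j.castSucc ∈ A i.castSucc ∧ j.succ ∈ A i.succ) ∨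
       (j.castSucc ∈ A i.succ ∧ j.succ ∈ A i.castSucc)) →
      (∀ j' : Fin P.n, j' < j →
        ¬ ((j'.castSucc ∈ A i.castSucc ∧ j'.succ ∈ A i.succ) ∨
           (j'.castSucc ∈ A i.succ ∧ j'.succ ∈ A i.castSucc))) →
      (P.dir j = true ↔ π i = true) := by
  classical
  obtain ⟨hdisj, hcov, hu0, hvlast, hfar, hpat⟩ := hA
  intro i j hcross hfirst
  have hadjfwd : ∀ e : Fin P.n, P.dir e = true → P.digraph.Adj e.castSucc e.succ :=
    fun e he => ⟨e, Or.inl ⟨he, rfl, rfl⟩⟩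
  have hadjbwd : ∀ e : Fin P.n, P.dir e = false → P.digraph.Adj e.succ e.castSucc :=
    fun e he => ⟨e, Or.inr ⟨he, rfl, rfl⟩⟩
  rcases hcross with ⟨h1, h2⟩ | ⟨h1, h2⟩
  · have hp := hpat i _ h1 _ h2
    constructor
    · intro hd
      cases hπ : π i with
      | false => exact absurd (hadjfwd j hd) (hp.2 hπ)
      | true => rfl
    · intro hπ
      cases hd : P.dir j with
      | false => exact absurd (hadjbwd j hd) (hp.1 hπ)
      | true => rfl
  · exfalso
    have hcover : ∀ x : Fin (P.n+1), ∃ a, x ∈ A a := by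
      intro x
      have hx : x ∈ ⋃ a, A a := by rw [hcov]; exact Set.mem_univ x
      exact Set.mem_iUnion.mp hx
    choose idx hidx using hcover
    have huniq : ∀ (x : Fin (P.n+1)) (a : Fin (k+1)), x ∈ A a → idx x = a := by
      intro x a hx
      by_contra h
      exact Set.disjoint_left.mp (hdisj _ _ h) (hidx x) hx
    have hstep : ∀ e : Fin P.n, (idx e.succ : ℕ) ≤ (idx e.castSucc : ℕ) + 1 ∧
        (idx e.castSucc : ℕ) ≤ (idx e.succ : ℕ) + 1 := by
      intro e
      have hadj : P.digraph.Adj e.castSucc e.succ ∨ P.digraph.Adj e.succ e.castSucc := by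
        cases hd : P.dir e with
        | false => exact Or.inr (hadjbwd e hd)
        | true => exact Or.inl (hadjfwd e hd)
      constructor
      · by_contra h
        push_neg at h
        have := hfar (idx e.castSucc) (idx e.succ) (by omega) _ (hidx _) _ (hidx _)
        tauto
      · by_contra h
        push_neg at h
        have := hfar (idx e.succ) (idx e.castSucc) (by omega) _ (hidx _) _ (hidx _)
        tauto
    set f : ℕ → ℕ := fun m => if h : m < P.n + 1 then (idx ⟨m, h⟩ : ℕ) else 0 with hf
    have hf0 : f 0 = 0 := by
      have h0 : (⟨0, Nat.succ_pos _⟩ : Fin (P.n+1)) = 0 := by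
        apply Fin.ext; simp
      simp only [hf, dif_pos (Nat.succ_pos P.n), h0, huniq _ _ hu0, Fin.val_zero]
    have hNn : (j : ℕ) < P.n := j.isLt
    have hfN : f (j : ℕ) = (i : ℕ) + 1 := by
      have hjc : (⟨(j : ℕ), by omega⟩ : Fin (P.n+1)) = j.castSucc := by
        apply Fin.ext; simp
      simp only [hf, dif_pos (show (j:ℕ) < P.n + 1 by omega), hjc, huniq _ _ h1,
        Fin.val_succ]
    set p : ℕ → Prop := fun m => f m ≤ (i : ℕ) with hpdef
    set m := Nat.findGreatest p (j : ℕ) with hm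
    have hm_le : m ≤ (j : ℕ) := Nat.findGreatest_le _
    have hpm : p m := Nat.findGreatest_spec (Nat.zero_le _)
      (show p 0 by rw [hpdef]; simp [hf0])
    have hmne : m ≠ (j : ℕ) := by
      intro h
      rw [hpdef] at hpm
      simp only [h, hfN] at hpm
      omega
    have hmlt : m < (j : ℕ) := lt_of_le_of_ne hm_le hmne
    have hnot : ¬ p (m + 1) :=
      Nat.findGreatest_is_greatest (Nat.lt_succ_self m) (by omega)
    set e : Fin P.n := ⟨m, by omega⟩ with he
    have hecv : (e.castSucc : ℕ) = m := rfl
    have hesv : (e.succ : ℕ) = m + 1 := rfl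
    have hfm : f m = (idx e.castSucc : ℕ) := by
      simp only [hf, dif_pos (show m < P.n + 1 by omega)]
      congr 1
    have hfm1 : f (m+1) = (idx e.succ : ℕ) := by
      simp only [hf, dif_pos (show m + 1 < P.n + 1 by omega)]
      congr 1
    rw [hpdef] at hpm
    rw [hfm] at hpm
    have hnot' : ¬ (idx e.succ : ℕ) ≤ (i : ℕ) := by rw [← hfm1]; exact hnot
    have hst := hstep e
    have h3 : idx e.castSucc = i.castSucc := by
      apply Fin.ext
      simp only [Fin.coe_castSucc]
      have := hnot'
      omega
    have h4 : idx e.succ = i.succ := by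
      apply Fin.ext
      simp only [Fin.val_succ]
      have := hnot'
      omega
    exact hfirst e (Fin.lt_def.mpr hmlt)
      (Or.inl ⟨h3 ▸ hidx e.castSucc, h4 ▸ hidx e.succ⟩)
end
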